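/- arXiv:2407.14485 — 8 statements merged into one kernel-verified Lean document; each statement's English description precedes it below -/
import Mathlib

section
/- The second price auction with symmetric tie-breaking — the mechanism that, for each finite set N ⊆ ℕ and each v ∈ [0,∞)^N, sets x_i^N(v) = 1/k if v_i = max_{j∈N} v_j where k = |{j ∈ N : v_j = max_{l∈N} v_l}| and x_i^N(v) = 0 otherwise, with payments given by the Myerson formula p_i^N(v) = v_i·x_i^N(v) − ∫_0^{v_i} x_i^N(z, v_{-i}) dz — satisfies non-wastefulness, symmetry, monotonicity (hence dominant-strategy incentive compatibility), sybil-proofness, and p_i^N(0, v_{-i}) = 0. -/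
open MeasureTheory Finset
open scoped Classical

noncomputable section

/-- A rule (allocation or payment) assigns, for each finite population `N ⊆ ℕ` and each
bid profile `v : ℕ → ℝ` (only the coordinates in `N` are relevant), a real number to
each bidder. -/
abbrev Rule := Finset ℕ → (ℕ → ℝ) → ℕ → ℝ

/-- `v ∈ [0,∞)^N`. -/
def NonnegOn (N : Finset ℕ) (v : ℕ → ℝ) : Prop := ∀ i ∈ N, 0 ≤ v i

/-- Shares are nonnegative and sum to at most one. -/
def Feasible (x : Rule) : Prop :=
  ∀ N v, NonnegOn N v → (∀ i ∈ N, 0 ≤ x N v i) ∧ ∑ i ∈ N, x N v i ≤ 1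

/-- Non-wastefulness: the whole unit is always allocated. -/
def NonWasteful (x : Rule) : Prop :=
  ∀ N v, N.Nonempty → NonnegOn N v → ∑ i ∈ N, x N v i = 1

/-- Symmetry: for a permutation `π` of the population, `x_j(v) = x_{π j}(π ⬝ v)`,
where `(π ⬝ v) (π i) = v i`, i.e. `π ⬝ v = v ∘ π.symm`. -/
def SymmetricRule (x : Rule) : Prop :=
  ∀ N v, NonnegOn N v → ∀ π : Equiv.Perm ℕ, (∀ i, i ∈ N ↔ π i ∈ N) →
    ∀ j ∈ N, x N v j = x N (v ∘ π.symm) (π j)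

/-- Monotonicity: each bidder's share is nondecreasing in the own bid. -/
def MonotoneRule (x : Rule) : Prop :=
  ∀ N, ∀ i ∈ N, ∀ v, NonnegOn N v → ∀ z₁ z₂ : ℝ, 0 ≤ z₁ → z₁ ≤ z₂ →
    x N (Function.update v i z₁) i ≤ x N (Function.update v i z₂) i

/-- Myerson payments: `p_i(v) = v_i · x_i(v) − ∫_0^{v_i} x_i(z, v_{-i}) dz`. -/
def MyersonPay (x p : Rule) : Prop :=
  ∀ N, ∀ i ∈ N, ∀ v, NonnegOn N v →
    p N v i = v i * x N v i - ∫ z in (0:ℝ)..(v i), x N (Function.update v i z) i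

/-- Bidders reporting value `0` pay nothing: `p_i(0, v_{-i}) = 0`. -/
def ZeroPayAtZero (p : Rule) : Prop :=
  ∀ N, ∀ i ∈ N, ∀ v, NonnegOn N v → p N (Function.update v i 0) i = 0

/-- Sybil-proofness: bidding truthfully from the original account and adding one sybil
`j ∉ N` with an arbitrary bid `u ≥ 0` is not profitable. -/
def SybilProof (x p : Rule) : Prop :=
  ∀ N, ∀ i ∈ N, ∀ j ∉ N, ∀ v, NonnegOn N v → ∀ u : ℝ, 0 ≤ u →
    v i * x N v i - p N v i ≥
      v i * (x (insert j N) (Function.update v j u) i +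
             x (insert j N) (Function.update v j u) j) -
        p (insert j N) (Function.update v j u) i -
        p (insert j N) (Function.update v j u) j

/-- The bid profile in which bidder `0` bids `a` and every other bidder bids `b`. -/
def prof (a b : ℝ) : ℕ → ℝ := fun k => if k = 0 then a else b

/-- The second price auction with symmetric tie-breaking: each highest bidder receives `1/k`,
where `k` is the number of highest bidders, and every other bidder receives `0`. -/
def spX : Rule := fun N v i =>
  if i ∈ N ∧ ∀ j ∈ N, v j ≤ v i
  then 1 / ((N.filter fun j => ∀ l ∈ N, v l ≤ v j).card : ℝ) else 0

/-- The Myerson payments associated with the second price auction. -/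
def spP : Rule := fun N v i =>
  v i * spX N v i - ∫ z in (0:ℝ)..(v i), spX N (Function.update v i z) i

noncomputable def msup (S : Finset ℕ) (v : ℕ → ℝ) : ℝ :=
  if h : S.Nonempty then max 0 (S.sup' h v) else 0

lemma msup_nonneg (S : Finset ℕ) (v : ℕ → ℝ) : 0 ≤ msup S v := by
  unfold msup; split <;> simp

lemma le_msup {S : Finset ℕ} {v : ℕ → ℝ} {j : ℕ} (hj : j ∈ S) : v j ≤ msup S v := by
  unfold msup
  rw [dif_pos ⟨j, hj⟩]
  exact le_max_of_le_right (Finset.le_sup' v hj)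

lemma msup_le {S : Finset ℕ} {v : ℕ → ℝ} {z : ℝ} (hz : 0 ≤ z) (h : ∀ j ∈ S, v j ≤ z) :
    msup S v ≤ z := by
  unfold msup; split
  · exact max_le hz ((Finset.sup'_le_iff _ _).2 h)
  · exact hz

lemma exists_msup_gt {S : Finset ℕ} {v : ℕ → ℝ} {u : ℝ} (hu : 0 ≤ u) (h : u < msup S v) :
    ∃ l ∈ S, u < v l := by
  by_contra hc
  push_neg at hc
  exact absurd (msup_le hu hc) (not_le.2 h)

lemma msup_congr {S : Finset ℕ} {v w : ℕ → ℝ} (h : ∀ l ∈ S, v l = w l) :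
    msup S v = msup S w := by
  unfold msup
  split
  · rw [Finset.sup'_congr _ rfl h]
  · rfl

lemma spX_nonneg (N : Finset ℕ) (v : ℕ → ℝ) (i : ℕ) : 0 ≤ spX N v i := by
  unfold spX; split
  · positivity
  · exact le_rfl

lemma spX_update_eq_one {N : Finset ℕ} {i : ℕ} {v : ℕ → ℝ} {z : ℝ}
    (hi : i ∈ N) (hz : msup (N.erase i) v < z) :
    spX N (Function.update v i z) i = 1 := by
  set w := Function.update v i z with hw
  have hwi : w i = z := Function.update_self i z v
  have hwin : ∀ l ∈ N, w l ≤ w i := by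
    intro l hl
    rcases eq_or_ne l i with rfl | hne
    · exact le_rfl
    · have h1 : w l = v l := Function.update_of_ne hne z v
      rw [h1, hwi]
      exact le_of_lt (lt_of_le_of_lt (le_msup (Finset.mem_erase.2 ⟨hne, hl⟩)) hz)
  have hfilter : (N.filter fun l => ∀ l' ∈ N, w l' ≤ w l) = {i} := by
    ext l
    simp only [Finset.mem_filter, Finset.mem_singleton]
    constructor
    · rintro ⟨hlN, hmax⟩
      by_contra hne
      have h1 : w i ≤ w l := hmax i hi
      have h2 : w l = v l := Function.update_of_ne hne z v
      have h3 : v l ≤ msup (N.erase i) v := le_msup (Finset.mem_erase.2 ⟨hne, hlN⟩)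
      rw [hwi, h2] at h1
      linarith
    · rintro rfl
      exact ⟨hi, hwin⟩
  unfold spX
  rw [if_pos ⟨hi, hwin⟩, hfilter]
  norm_num

lemma spX_update_eq_zero {N : Finset ℕ} {i : ℕ} {v : ℕ → ℝ} {z : ℝ}
    (hz0 : 0 ≤ z) (hz : z < msup (N.erase i) v) :
    spX N (Function.update v i z) i = 0 := by
  obtain ⟨l, hl, hlt⟩ := exists_msup_gt hz0 hz
  have hli : l ≠ i := (Finset.mem_erase.1 hl).1
  have hcond : ¬ (i ∈ N ∧ ∀ j ∈ N, Function.update v i z j ≤ Function.update v i z i) := by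
    rintro ⟨_, h⟩
    have := h l (Finset.mem_erase.1 hl).2
    rw [Function.update_of_ne hli, Function.update_self] at this
    linarith
  unfold spX
  rw [if_neg hcond]

lemma integral_spX {N : Finset ℕ} {i : ℕ} (hi : i ∈ N) (v : ℕ → ℝ) {b : ℝ} (hb : 0 ≤ b) :
    (∫ z in (0:ℝ)..b, spX N (Function.update v i z) i)
      = max (b - msup (N.erase i) v) 0 := by
  set m := msup (N.erase i) v with hm
  have hm0 : 0 ≤ m := msup_nonneg _ _
  have key : ∀ z ∈ Set.Ioc (0:ℝ) b, z ≠ m →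
      spX N (Function.update v i z) i = Set.indicator (Set.Ioi m) (fun _ => (1:ℝ)) z := by
    intro z hz hne
    rcases lt_or_gt_of_ne hne with h | h
    · rw [spX_update_eq_zero hz.1.le h, Set.indicator_of_notMem (by simpa using h.le)]
    · rw [spX_update_eq_one hi h, Set.indicator_of_mem (Set.mem_Ioi.2 h) _]
  have hcg : (∫ z in (0:ℝ)..b, spX N (Function.update v i z) i)
      = ∫ z in (0:ℝ)..b, Set.indicator (Set.Ioi m) (fun _ => (1:ℝ)) z := by
    apply intervalIntegral.integral_congr_ae
    have hae : ∀ᵐ x : ℝ, x ≠ m := by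
      rw [ae_iff]
      simpa using measure_singleton m
    filter_upwards [hae] with z hz hzI
    rw [Set.uIoc_of_le hb] at hzI
    exact key z hzI hz
  rw [hcg, intervalIntegral.integral_of_le hb,
    MeasureTheory.setIntegral_indicator measurableSet_Ioi]
  have hset : Set.Ioc (0:ℝ) b ∩ Set.Ioi m = Set.Ioc m b := by
    rw [Set.Ioc_inter_Ioi]
    simp [max_eq_right hm0]
  rw [hset, MeasureTheory.setIntegral_const, measureReal_def, Real.volume_Ioc, smul_eq_mul, mul_one]
  rcases le_total b m with h | h
  · rw [ENNReal.ofReal_eq_zero.2 (by linarith), ENNReal.toReal_zero,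
      max_eq_right (by linarith)]
  · rw [ENNReal.toReal_ofReal (by linarith), max_eq_left (by linarith)]

-- NonWasteful
lemma spX_nonwasteful : ∀ (N : Finset ℕ) (v : ℕ → ℝ), N.Nonempty →
    ∑ i ∈ N, spX N v i = 1 := by
  intro N v hN
  set W := N.filter fun j => ∀ l ∈ N, v l ≤ v j with hW
  have hWne : W.Nonempty := by
    obtain ⟨b, hb, hmax⟩ := Finset.exists_max_image N v hN
    exact ⟨b, Finset.mem_filter.2 ⟨hb, hmax⟩⟩
  have hcard : (0:ℝ) < (W.card : ℝ) := by exact_mod_cast Finset.card_pos.2 hWne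
  have hsum : ∑ i ∈ N, spX N v i = ∑ i ∈ N, if i ∈ W then 1 / (W.card : ℝ) else 0 := by
    apply Finset.sum_congr rfl
    intro i hiN
    unfold spX
    by_cases h : ∀ j ∈ N, v j ≤ v i
    · rw [if_pos ⟨hiN, h⟩, if_pos (Finset.mem_filter.2 ⟨hiN, h⟩)]
    · rw [if_neg (fun hc => h hc.2), if_neg (fun hm => h (Finset.mem_filter.1 hm).2)]
  rw [hsum, Finset.sum_ite_mem, Finset.inter_eq_right.2 (Finset.filter_subset _ _),
    Finset.sum_const, nsmul_eq_mul, mul_one_div, div_self (ne_of_gt hcard)]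
-- Symmetry
lemma spX_symmetric : ∀ (N : Finset ℕ) (v : ℕ → ℝ), ∀ π : Equiv.Perm ℕ,
    (∀ i, i ∈ N ↔ π i ∈ N) → ∀ j ∈ N, spX N v j = spX N (v ∘ π.symm) (π j) := by
  intro N v π hiff j hj
  have hmemsymm : ∀ l, l ∈ N ↔ π.symm l ∈ N := by
    intro l
    constructor
    · intro hl
      exact (hiff (π.symm l)).2 (by simpa using hl)
    · intro hl
      simpa using (hiff (π.symm l)).1 hl
  have hcondgen : ∀ a ∈ N, ((∀ l ∈ N, v l ≤ v a) ↔ ∀ l ∈ N, (v ∘ π.symm) l ≤ (v ∘ π.symm) (π a)) := by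
    intro a _
    simp only [Function.comp_apply, Equiv.symm_apply_apply]
    constructor
    · intro h l hl
      exact h (π.symm l) ((hmemsymm l).1 hl)
    · intro h l hl
      have := h (π l) ((hiff l).1 hl)
      simpa using this
  have hcards : (N.filter fun l => ∀ l' ∈ N, v l' ≤ v l).card
      = (N.filter fun l => ∀ l' ∈ N, (v ∘ π.symm) l' ≤ (v ∘ π.symm) l).card := by
    apply Finset.card_bij (fun a _ => π a)
    · intro a ha
      obtain ⟨haN, hamax⟩ := Finset.mem_filter.1 ha
      refine Finset.mem_filter.2 ⟨(hiff a).1 haN, ?_⟩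
      have := (hcondgen a haN).1 hamax
      simpa using this
    · intro a _ b _ hab
      exact π.injective hab
    · intro b hb
      obtain ⟨hbN, hbmax⟩ := Finset.mem_filter.1 hb
      refine ⟨π.symm b, Finset.mem_filter.2 ⟨(hmemsymm b).1 hbN, ?_⟩, by simp⟩
      have h2 : ∀ l ∈ N, (v ∘ π.symm) l ≤ (v ∘ π.symm) (π (π.symm b)) := by
        simpa using hbmax
      exact (hcondgen (π.symm b) ((hmemsymm b).1 hbN)).2 h2
  unfold spX
  by_cases h : j ∈ N ∧ ∀ l ∈ N, v l ≤ v j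
  · rw [if_pos h, if_pos ⟨(hiff j).1 hj, (hcondgen j hj).1 h.2⟩, hcards]
  · rw [if_neg h, if_neg ?_]
    rintro ⟨_, hc⟩
    exact h ⟨hj, (hcondgen j hj).2 hc⟩

-- Monotonicity
lemma spX_monotone : ∀ (N : Finset ℕ), ∀ i ∈ N, ∀ (v : ℕ → ℝ), ∀ z₁ z₂ : ℝ, z₁ ≤ z₂ →
    spX N (Function.update v i z₁) i ≤ spX N (Function.update v i z₂) i := by
  intro N i hi v z₁ z₂ h12
  have hupd : ∀ (z : ℝ) (l : ℕ), l ≠ i → Function.update v i z l = v l :=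
    fun z l h => Function.update_of_ne h _ _
  have hself : ∀ z : ℝ, Function.update v i z i = z := fun z => Function.update_self _ _ _
  by_cases h : i ∈ N ∧ ∀ j ∈ N, Function.update v i z₁ j ≤ Function.update v i z₁ i
  · have h2 : ∀ j ∈ N, Function.update v i z₂ j ≤ Function.update v i z₂ i := by
      intro l hl
      by_cases hne : l = i
      · subst hne; exact le_rfl
      · have := h.2 l hl
        rw [hupd _ _ hne, hself] at this
        rw [hupd _ _ hne, hself]
        linarith
    have hsub : (N.filter fun l => ∀ l' ∈ N, Function.update v i z₂ l' ≤ Function.update v i z₂ l)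
        ⊆ (N.filter fun l => ∀ l' ∈ N, Function.update v i z₁ l' ≤ Function.update v i z₁ l) := by
      intro l hl
      obtain ⟨hlN, hlmax⟩ := Finset.mem_filter.1 hl
      refine Finset.mem_filter.2 ⟨hlN, ?_⟩
      by_cases hne : l = i
      · subst hne; exact h.2
      · intro l' hl'
        have hml' := hlmax l' hl'
        rw [hupd _ _ hne]
        rw [hupd _ _ hne] at hml'
        by_cases hne' : l' = i
        · have hmi := hlmax i hi
          rw [hupd _ _ hne, hself] at hmi
          rw [hne', hself]
          linarith
        · rw [hupd _ _ hne'] at hml'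
          rw [hupd _ _ hne']
          exact hml'
    have hi2 : i ∈ (N.filter fun l => ∀ l' ∈ N,
        Function.update v i z₂ l' ≤ Function.update v i z₂ l) := Finset.mem_filter.2 ⟨hi, h2⟩
    have hc2 : (0:ℝ) < ((N.filter fun l => ∀ l' ∈ N,
        Function.update v i z₂ l' ≤ Function.update v i z₂ l).card : ℝ) := by
      exact_mod_cast Finset.card_pos.2 ⟨i, hi2⟩
    have hle : ((N.filter fun l => ∀ l' ∈ N,
          Function.update v i z₂ l' ≤ Function.update v i z₂ l).card : ℝ)
        ≤ ((N.filter fun l => ∀ l' ∈ N,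
          Function.update v i z₁ l' ≤ Function.update v i z₁ l).card : ℝ) := by
      exact_mod_cast Finset.card_le_card hsub
    unfold spX
    rw [if_pos ⟨hi, h.2⟩, if_pos ⟨hi, h2⟩]
    exact one_div_le_one_div_of_le hc2 hle
  · have hz : spX N (Function.update v i z₁) i = 0 := by unfold spX; rw [if_neg h]
    rw [hz]
    exact spX_nonneg N _ i

lemma spP_zero : ∀ (N : Finset ℕ), ∀ i ∈ N, ∀ v : ℕ → ℝ,
    spP N (Function.update v i 0) i = 0 := by
  intro N i hi v
  simp [spP, Function.update_self]

lemma spX_sybil : ∀ (N : Finset ℕ), ∀ i ∈ N, ∀ j ∉ N, ∀ v : ℕ → ℝ,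
    (∀ l ∈ N, 0 ≤ v l) → ∀ u : ℝ, 0 ≤ u →
    v i * spX N v i - spP N v i ≥
      v i * (spX (insert j N) (Function.update v j u) i +
             spX (insert j N) (Function.update v j u) j) -
        spP (insert j N) (Function.update v j u) i -
        spP (insert j N) (Function.update v j u) j := by
  intro N i hi j hj v hv u hu
  have hij : i ≠ j := fun h => hj (h ▸ hi)
  have hvi : 0 ≤ v i := hv i hi
  set v' := Function.update v j u with hv'def
  set N' := insert j N with hN'def
  have hiN' : i ∈ N' := Finset.mem_insert_of_mem hi
  have hjN' : j ∈ N' := Finset.mem_insert_self j N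
  have hv'i : v' i = v i := Function.update_of_ne hij u v
  have hv'j : v' j = u := Function.update_self j u v
  have hv'N : ∀ l ∈ N, v' l = v l := fun l hl => Function.update_of_ne (by rintro rfl; exact hj hl) u v
  have hNej : N'.erase j = N := Finset.erase_insert hj
  set m := msup (N.erase i) v with hm
  set M := msup N v with hM
  have hm0 : 0 ≤ m := msup_nonneg (N.erase i) v
  have hviM : v i ≤ M := le_msup hi
  have hNei : N'.erase i = insert j (N.erase i) := by
    ext l
    simp only [hN'def, Finset.mem_erase, Finset.mem_insert]
    constructor
    · rintro ⟨hli, hl | hl⟩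
      · exact Or.inl hl
      · exact Or.inr ⟨hli, hl⟩
    · rintro (rfl | ⟨hli, hl⟩)
      · exact ⟨fun h => hij h.symm, Or.inl rfl⟩
      · exact ⟨hli, Or.inr hl⟩
  have hmsupi : msup (N'.erase i) v' = max u m := by
    apply le_antisymm
    · apply msup_le (le_trans hu (le_max_left u m))
      intro l hl
      rw [hNei] at hl
      rcases Finset.mem_insert.1 hl with rfl | hl
      · rw [hv'j]; exact le_max_left u m
      · rw [hv'N l (Finset.mem_of_mem_erase hl)]
        exact le_trans (le_msup hl) (le_max_right u m)
    · apply max_le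
      · have h1 : v' j ≤ msup (N'.erase i) v' :=
          le_msup (by rw [hNei]; exact Finset.mem_insert_self _ _)
        rwa [hv'j] at h1
      · apply msup_le (msup_nonneg _ _)
        intro l hl
        rw [← hv'N l (Finset.mem_of_mem_erase hl)]
        exact le_msup (by rw [hNei]; exact Finset.mem_insert_of_mem hl)
  have hmsupj : msup (N'.erase j) v' = M := by
    rw [hNej, hM]
    exact msup_congr hv'N
  have hLHS : v i * spX N v i - spP N v i = max (v i - m) 0 := by
    simp only [spP]
    rw [integral_spX hi v hvi]
    ring
  have hIi : (∫ z in (0:ℝ)..(v' i), spX N' (Function.update v' i z) i)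
      = max (v i - max u m) 0 := by
    rw [hv'i, integral_spX hiN' v' hvi, hmsupi]
  have hIj : (∫ z in (0:ℝ)..(v' j), spX N' (Function.update v' j z) j)
      = max (u - M) 0 := by
    rw [hv'j, integral_spX hjN' v' hu, hmsupj]
  rw [hLHS]
  simp only [spP]
  rw [hIi, hIj, hv'i, hv'j]
  have hmax1 : max (v i - max u m) 0 ≤ max (v i - m) 0 :=
    max_le_max (by linarith [le_max_right u m]) le_rfl
  rcases lt_trichotomy u M with hcase | hcase | hcase
  · have hXj : spX N' v' j = 0 := by
      rw [hv'def]
      exact spX_update_eq_zero hu (by rw [hNej]; exact hcase)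
    have hB : max (u - M) 0 = 0 := max_eq_right (by linarith)
    rw [hXj, hB]
    ring_nf
    linarith [hmax1]
  · have hXj0 : 0 ≤ spX N' v' j := spX_nonneg _ _ _
    have hprod : (v i - u) * spX N' v' j ≤ 0 :=
      mul_nonpos_of_nonpos_of_nonneg (by linarith) hXj0
    have hB : max (u - M) 0 = 0 := max_eq_right (by linarith)
    rw [hB]
    ring_nf
    ring_nf at hprod
    linarith [hmax1, hprod]
  · have hXj : spX N' v' j = 1 := by
      rw [hv'def]
      exact spX_update_eq_one hjN' (by rw [hNej]; exact hcase)
    have hA : max (v i - max u m) 0 = 0 :=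
      max_eq_right (by linarith [le_max_left u m])
    have hB : max (u - M) 0 = u - M := max_eq_left (by linarith)
    rw [hXj, hA, hB]
    ring_nf
    linarith [le_max_right (v i - m) (0:ℝ)]

/-- The main theorem (sufficiency): the second price auction with symmetric tie-breaking and
Myerson payments is non-wasteful, symmetric, monotone (hence dominant-strategy incentive
compatible), sybil-proof, and charges `0` to bidders reporting value `0`. -/
theorem second_price_satisfies_axioms :
    NonWasteful spX ∧ SymmetricRule spX ∧ MonotoneRule spX ∧
      SybilProof spX spP ∧ ZeroPayAtZero spP := by
  refine ⟨?_, ?_, ?_, ?_, ?_⟩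
  · intro N v hN _
    exact spX_nonwasteful N v hN
  · intro N v _ π hiff j hj
    exact spX_symmetric N v π hiff j hj
  · intro N i hi v _ z₁ z₂ _ h12
    exact spX_monotone N i hi v z₁ z₂ h12
  · intro N i hi j hj v hv u hu
    exact spX_sybil N i hi j hj v hv u hu
  · intro N i hi v _
    exact spP_zero N i hi v
end
end

section
/- Let (x,p) be a mechanism satisfying non-wastefulness, symmetry, monotonicity, Myerson payments and sybil-proofness. Then for any real numbers u > v ≥ 0, limsup_{n→∞} x_1(u, v_{[2,n]}) = 1, where x_1(u, v_{[2,n]}) denotes bidder 1's allocation in a population of n bidders in which bidder 1 bids u and the remaining n−1 bidders each bid v. -/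
open MeasureTheory Finset
open scoped Classical

noncomputable section

/-- Lemma 1: for `u > v ≥ 0`, `limsup_n x_1(u, v_[2,n]) = 1`, where bidder `1` (index `0`)
bids `u` against `n−1` bidders each bidding `v` in the population `{0, …, n−1}`. -/
theorem limsup_top_allocation_eq_one (x p : Rule)
    (hF : Feasible x) (hNW : NonWasteful x) (hSym : SymmetricRule x)
    (hMon : MonotoneRule x) (hMy : MyersonPay x p) (hZ : ZeroPayAtZero p)
    (hSP : SybilProof x p) (u v : ℝ) (hv : 0 ≤ v) (huv : v < u) :
    Filter.limsup (fun n : ℕ => x (Finset.range n) (prof u v) 0) Filter.atTop = 1 := by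

  have hu : 0 ≤ u := hv.trans huv.le
  set P : ℕ → ℝ := prof u v with hPdef
  have hP0 : P 0 = u := by simp [hPdef, prof]
  have hPn : ∀ k : ℕ, k ≠ 0 → P k = v := by intro k hk; simp [hPdef, prof, hk]
  set a : ℕ → ℝ := fun n => x (Finset.range n) P 0 with hadef
  set f : ℕ → ℝ → ℝ := fun n z => x (Finset.range n) (Function.update P 0 z) 0 with hfdef
  set I : ℕ → ℝ := fun n => ∫ z in (0:ℝ)..u, f n z with hIdef
  set b : ℕ → ℝ := fun n => x (Finset.range (n+1)) P n with hbdef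
  set J : ℕ → ℝ :=
    fun n => ∫ z in (0:ℝ)..v, x (Finset.range (n+1)) (Function.update P n z) n with hJdef
  -- nonnegativity of the profiles involved
  have hNNP : ∀ N : Finset ℕ, NonnegOn N P := by
    intro N i _
    by_cases h : i = 0 <;> simp [hPdef, prof, h, hu, hv]
  have hNNupd : ∀ (i : ℕ) (z : ℝ), 0 ≤ z → ∀ N : Finset ℕ,
      NonnegOn N (Function.update P i z) := by
    intro i z hz N k _
    rcases eq_or_ne k i with rfl | h
    · simpa using hz
    · rw [Function.update_of_ne h]
      by_cases h0 : k = 0 <;> simp [hPdef, prof, h0, hu, hv]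
  -- basic bounds from feasibility
  have hbound : ∀ (N : Finset ℕ) (w : ℕ → ℝ), NonnegOn N w → ∀ i ∈ N,
      0 ≤ x N w i ∧ x N w i ≤ 1 := by
    intro N w hw i hi
    obtain ⟨h1, h2⟩ := hF N w hw
    exact ⟨h1 i hi, le_trans (Finset.single_le_sum (fun j hj => h1 j hj) hi) h2⟩
  -- monotonicity of f n
  have hfmono : ∀ n, 1 ≤ n → ∀ z₁ z₂ : ℝ, 0 ≤ z₁ → z₁ ≤ z₂ → f n z₁ ≤ f n z₂ := by
    intro n hn z₁ z₂ h1 h12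
    exact hMon (Finset.range n) 0 (Finset.mem_range.mpr hn) P (hNNP _) z₁ z₂ h1 h12
  have hf01 : ∀ n, 1 ≤ n → ∀ z : ℝ, 0 ≤ z → 0 ≤ f n z ∧ f n z ≤ 1 := by
    intro n hn z hz
    exact hbound _ _ (hNNupd 0 z hz _) 0 (Finset.mem_range.mpr hn)
  -- integrability and bounds on I
  have hIint : ∀ n, 1 ≤ n → IntervalIntegrable (f n) MeasureTheory.volume 0 u := by
    intro n hn
    apply MonotoneOn.intervalIntegrable
    intro z₁ hz₁ z₂ hz₂ h12
    rw [Set.uIcc_of_le hu] at hz₁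
    exact hfmono n hn z₁ z₂ hz₁.1 h12
  have hI0 : ∀ n, 1 ≤ n → 0 ≤ I n := by
    intro n hn
    exact intervalIntegral.integral_nonneg hu (fun z hz => (hf01 n hn z hz.1).1)
  have hIu : ∀ n, 1 ≤ n → I n ≤ u := by
    intro n hn
    have h := intervalIntegral.integral_mono_on hu (hIint n hn)
      (intervalIntegrable_const (c := (1:ℝ))) (fun z hz => (hf01 n hn z hz.1).2)
    simpa using h
  -- Myerson payment identities
  have hMy0 : ∀ n, 1 ≤ n → p (Finset.range n) P 0 = u * a n - I n := by
    intro n hn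
    have h := hMy (Finset.range n) 0 (Finset.mem_range.mpr hn) P (hNNP _)
    rw [hP0] at h
    exact h
  have hMyn : ∀ n, 1 ≤ n → p (Finset.range (n+1)) P n = v * b n - J n := by
    intro n hn
    have h := hMy (Finset.range (n+1)) n (Finset.mem_range.mpr (by omega)) P (hNNP _)
    rw [hPn n (by omega)] at h
    exact h
  have hJ0 : ∀ n, 0 ≤ J n := by
    intro n
    exact intervalIntegral.integral_nonneg hv
      (fun z hz => (hbound _ _ (hNNupd n z hz.1 _) n (Finset.mem_range.mpr (by omega))).1)
  -- symmetry among the v-bidders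
  have hsymm : ∀ n, 1 ≤ n → ∀ i ∈ Finset.range (n+1), i ≠ 0 →
      x (Finset.range (n+1)) P i = b n := by
    intro n hn i hi hi0
    rcases eq_or_ne i n with rfl | hin
    · rfl
    have hnn : n ≠ 0 := by omega
    have hnmem : n ∈ Finset.range (n+1) := Finset.mem_range.mpr (by omega)
    set π : Equiv.Perm ℕ := Equiv.swap i n with hπdef
    have hmem : ∀ m, m ∈ Finset.range (n+1) ↔ π m ∈ Finset.range (n+1) := by
      intro m
      rcases eq_or_ne m i with rfl | hmi
      · simp [hπdef, Equiv.swap_apply_left, hi, hnmem]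
      rcases eq_or_ne m n with rfl | hmn
      · simp [hπdef, Equiv.swap_apply_right, hi, hnmem]
      · rw [show π m = m from Equiv.swap_apply_of_ne_of_ne hmi hmn]
    have hPπ : P ∘ π.symm = P := by
      funext k
      have hs : π.symm = π := by rw [hπdef]; exact Equiv.symm_swap i n
      rw [hs]
      simp only [Function.comp_apply]
      rcases eq_or_ne k i with rfl | hki
      · rw [show π k = n from Equiv.swap_apply_left k n, hPn n hnn, hPn k hi0]
      rcases eq_or_ne k n with rfl | hkn
      · rw [show π k = i from Equiv.swap_apply_right i k, hPn i hi0, hPn k hnn]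
      · rw [show π k = k from Equiv.swap_apply_of_ne_of_ne hki hkn]
    have h := hSym (Finset.range (n+1)) P (hNNP _) π hmem i hi
    rw [hPπ, show π i = n from Equiv.swap_apply_left i n] at h
    exact h
  -- each v-bidder gets (1 - a (n+1))/n
  have hbval : ∀ n, 1 ≤ n → a (n+1) + (n : ℝ) * b n = 1 := by
    intro n hn
    have h0mem : (0:ℕ) ∈ Finset.range (n+1) := Finset.mem_range.mpr (by omega)
    have hsum := hNW (Finset.range (n+1)) P ⟨0, h0mem⟩ (hNNP _)
    rw [← Finset.add_sum_erase _ _ h0mem] at hsum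
    have hcongr : ∀ i ∈ (Finset.range (n+1)).erase 0, x (Finset.range (n+1)) P i = b n :=
      fun i hi => hsymm n hn i (Finset.mem_of_mem_erase hi) (Finset.ne_of_mem_erase hi)
    rw [Finset.sum_congr rfl hcongr, Finset.sum_const, Finset.card_erase_of_mem h0mem,
      Finset.card_range] at hsum
    have hcard : (n + 1 - 1 : ℕ) = n := by omega
    rw [hcard, nsmul_eq_mul] at hsum
    exact hsum
  have hbnonneg : ∀ n, 1 ≤ n → 0 ≤ b n :=
    fun n hn => (hbound _ _ (hNNP _) n (Finset.mem_range.mpr (by omega))).1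
  -- the key sybil-proofness inequality
  have hkey : ∀ n, 1 ≤ n → I (n+1) + (u - v) * b n ≤ I n := by
    intro n hn
    have hsp := hSP (Finset.range n) 0 (Finset.mem_range.mpr hn) n
      (Finset.notMem_range_self) P (hNNP _) v hv
    have hins : insert n (Finset.range n) = Finset.range (n+1) := (Finset.range_add_one).symm
    have hupd : Function.update P n v = P := by
      rw [← hPn n (by omega)]; exact Function.update_eq_self n P
    rw [hins, hupd, hP0] at hsp
    have e1 : x (Finset.range n) P 0 = a n := rfl
    have e2 : x (Finset.range (n+1)) P 0 = a (n+1) := rfl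
    have e3 : x (Finset.range (n+1)) P n = b n := rfl
    rw [e1, e2, e3, hMy0 n hn, hMy0 (n+1) (by omega), hMyn n hn] at hsp
    have hJ := hJ0 n
    linarith
  -- limsup ≤ 1 and boundedness facts
  have hub : ∀ᶠ n in Filter.atTop, a n ≤ 1 :=
    Filter.eventually_atTop.mpr
      ⟨1, fun n hn => (hbound _ _ (hNNP _) 0 (Finset.mem_range.mpr hn)).2⟩
  have hlbd : ∀ᶠ n in Filter.atTop, (0:ℝ) ≤ a n :=
    Filter.eventually_atTop.mpr
      ⟨1, fun n hn => (hbound _ _ (hNNP _) 0 (Finset.mem_range.mpr hn)).1⟩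
  have hbd : Filter.IsBoundedUnder (· ≤ ·) Filter.atTop a :=
    ⟨1, by simpa [Filter.eventually_map] using hub⟩
  have hbd' : Filter.IsBoundedUnder (· ≥ ·) Filter.atTop a :=
    ⟨0, by simpa [Filter.eventually_map] using hlbd⟩
  have hcob : Filter.IsCoboundedUnder (· ≤ ·) Filter.atTop a := hbd'.isCoboundedUnder_le
  have hle : Filter.limsup a Filter.atTop ≤ 1 := Filter.limsup_le_of_le hcob hub
  refine le_antisymm hle ?_
  by_contra hlt
  rw [not_le] at hlt
  set L := Filter.limsup a Filter.atTop with hLdef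
  set q : ℝ := (L + 1) / 2 with hqdef
  have hLq : L < q := by rw [hqdef]; linarith
  have hq1 : q < 1 := by rw [hqdef]; linarith
  have hev : ∀ᶠ n in Filter.atTop, a n < q := Filter.eventually_lt_of_limsup_lt hLq hbd
  obtain ⟨N₁, hN₁⟩ := Filter.eventually_atTop.mp hev
  set N₀ := max N₁ 1 with hN₀def
  have hN₀1 : 1 ≤ N₀ := le_max_right _ _
  set ε : ℝ := 1 - q with hεdef
  have hε : 0 < ε := by rw [hεdef]; linarith
  set c : ℝ := (u - v) * ε with hcdef
  have hc : 0 < c := by rw [hcdef]; nlinarith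
  -- one step of the telescoping estimate
  have hstep : ∀ n, N₀ ≤ n → I (n+1) + c * (1 / (n:ℝ)) ≤ I n := by
    intro n hn
    have hn1 : 1 ≤ n := le_trans hN₀1 hn
    have hnpos : (0:ℝ) < (n:ℝ) := by exact_mod_cast hn1
    have hN₁n : N₁ ≤ n := le_trans (le_max_left _ _) hn
    have haq : a (n+1) < q := hN₁ (n+1) (by omega)
    have hb := hbval n hn1
    have hbn : ε / (n:ℝ) ≤ b n := by
      rw [div_le_iff₀ hnpos]
      nlinarith
    have hk := hkey n hn1
    have huv' : (0:ℝ) ≤ u - v := by linarith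
    have h1 : (u - v) * (ε / (n:ℝ)) ≤ (u - v) * b n :=
      mul_le_mul_of_nonneg_left hbn huv'
    have h2 : c * (1 / (n:ℝ)) = (u - v) * (ε / (n:ℝ)) := by
      rw [hcdef]; ring
    linarith
  -- telescoping
  have htel : ∀ M : ℕ,
      I (N₀ + M) + c * ∑ k ∈ Finset.Ico N₀ (N₀ + M), (1:ℝ) / (k:ℝ) ≤ I N₀ := by
    intro M
    induction M with
    | zero => simp
    | succ M ih =>
      have hstep' := hstep (N₀ + M) (Nat.le_add_right _ _)
      have hIco : ∑ k ∈ Finset.Ico N₀ (N₀ + (M+1)), (1:ℝ) / (k:ℝ)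
          = (∑ k ∈ Finset.Ico N₀ (N₀ + M), (1:ℝ) / (k:ℝ)) + (1:ℝ) / ((N₀ + M : ℕ):ℝ) := by
        rw [show N₀ + (M+1) = (N₀ + M) + 1 from rfl]
        exact Finset.sum_Ico_succ_top (Nat.le_add_right _ _) _
      rw [hIco]
      have hadd : c * ((∑ k ∈ Finset.Ico N₀ (N₀ + M), (1:ℝ) / (k:ℝ)) + (1:ℝ)/((N₀ + M : ℕ):ℝ))
          = c * ∑ k ∈ Finset.Ico N₀ (N₀ + M), (1:ℝ) / (k:ℝ) + c * (1 / ((N₀ + M : ℕ):ℝ)) := by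
        ring
      rw [show N₀ + (M+1) = (N₀ + M) + 1 from rfl, hadd]
      linarith
  -- bounded partial sums of the harmonic series: contradiction
  have hbded : ∀ M : ℕ, ∑ k ∈ Finset.Ico N₀ (N₀ + M), (1:ℝ) / (k:ℝ) ≤ u / c := by
    intro M
    have h1 := htel M
    have h2 := hI0 (N₀ + M) (by omega)
    have h3 := hIu N₀ hN₀1
    rw [le_div_iff₀ hc]
    linarith [mul_comm c (∑ k ∈ Finset.Ico N₀ (N₀ + M), (1:ℝ) / (k:ℝ))]
  have hdiv : Filter.Tendsto (fun M : ℕ => ∑ k ∈ Finset.range M, (1:ℝ) / (k:ℝ))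
      Filter.atTop Filter.atTop := by
    rw [← not_summable_iff_tendsto_nat_atTop_of_nonneg (fun k => by positivity)]
    exact Real.not_summable_one_div_natCast
  obtain ⟨M, hM1, hM2⟩ : ∃ M, N₀ ≤ M ∧
      u / c + ∑ k ∈ Finset.range N₀, (1:ℝ) / (k:ℝ) < ∑ k ∈ Finset.range M, (1:ℝ) / (k:ℝ) := by
    have h := ((hdiv.eventually_gt_atTop
      (u / c + ∑ k ∈ Finset.range N₀, (1:ℝ) / (k:ℝ))).and (Filter.eventually_ge_atTop N₀)).exists
    obtain ⟨M, h1, h2⟩ := h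
    exact ⟨M, h2, h1⟩
  have hsplit : ∑ k ∈ Finset.range N₀, (1:ℝ) / (k:ℝ) + ∑ k ∈ Finset.Ico N₀ M, (1:ℝ) / (k:ℝ)
      = ∑ k ∈ Finset.range M, (1:ℝ) / (k:ℝ) :=
    Finset.sum_range_add_sum_Ico _ hM1
  have hIcoM := hbded (M - N₀)
  rw [Nat.add_sub_cancel' hM1] at hIcoM
  linarith
end
end

section
/- Let (x,p) be a mechanism satisfying non-wastefulness, symmetry, monotonicity, Myerson payments and sybil-proofness. Then in the two-bidder population, for any real numbers u ≥ v ≥ 0, the truthful utility of bidder 1 satisfies U_1(u,v) = ∫_0^u x_1(z,v) dz ≥ u − v. -/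
open MeasureTheory Finset
open scoped Classical

noncomputable section

namespace SybilAux

lemma prof_zero (a b : ℝ) : prof a b 0 = a := by simp [prof]

lemma prof_ne (a b : ℝ) {k : ℕ} (hk : k ≠ 0) : prof a b k = b := by simp [prof, hk]

lemma upd0 (v a z : ℝ) : Function.update (prof a v) 0 z = prof z v := by
  funext k
  rw [Function.update_apply]
  by_cases hk : k = 0
  · simp [hk, prof]
  · simp [hk, prof]

lemma updn (a b : ℝ) {n : ℕ} (hn : n ≠ 0) : Function.update (prof a b) n b = prof a b := by
  funext k
  rw [Function.update_apply]
  split_ifs with h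
  · subst h; rw [prof_ne _ _ hn]
  · rfl

lemma nonneg_prof {v t : ℝ} (hv : 0 ≤ v) (ht : 0 ≤ t) (N : Finset ℕ) :
    NonnegOn N (prof t v) := by
  intro i _
  by_cases h : i = 0
  · rw [h, prof_zero]; exact ht
  · rw [prof_ne _ _ h]; exact hv

lemma nonneg_upd {v t z : ℝ} (hv : 0 ≤ v) (ht : 0 ≤ t) (hz : 0 ≤ z) (n : ℕ) (N : Finset ℕ) :
    NonnegOn N (Function.update (prof t v) n z) := by
  intro i _
  rw [Function.update_apply]
  split_ifs with h
  · exact hz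
  · by_cases h0 : i = 0
    · rw [h0, prof_zero]; exact ht
    · rw [prof_ne _ _ h0]; exact hv

variable (x p : Rule)

/-- Bidder 0's share in the `n`-bidder population at profile `(t, v, …, v)`. -/
def sig (v : ℝ) (n : ℕ) (t : ℝ) : ℝ := x (Finset.range n) (prof t v) 0

/-- The last `v`-bidder's share in the `(m+1)`-bidder population at profile `(t, v, …, v)`. -/
def tau (v : ℝ) (m : ℕ) (t : ℝ) : ℝ := x (Finset.range (m + 1)) (prof t v) m

/-- Truthful utility of bidder 0. -/
def II (v : ℝ) (n : ℕ) (b : ℝ) : ℝ := ∫ t in (0:ℝ)..b, sig x v n t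

variable {v : ℝ}

lemma sig_nonneg (hF : Feasible x) (hv : 0 ≤ v) {t : ℝ} (ht : 0 ≤ t) {n : ℕ} (hn : 0 < n) :
    0 ≤ sig x v n t :=
  (hF _ _ (nonneg_prof hv ht _)).1 0 (Finset.mem_range.mpr hn)

lemma sig_le_one (hF : Feasible x) (hv : 0 ≤ v) {t : ℝ} (ht : 0 ≤ t) {n : ℕ} (hn : 0 < n) :
    sig x v n t ≤ 1 := by
  have h := hF (Finset.range n) (prof t v) (nonneg_prof hv ht _)
  exact le_trans (Finset.single_le_sum (fun i hi => h.1 i hi) (Finset.mem_range.mpr hn)) h.2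

lemma tau_nonneg (hF : Feasible x) (hv : 0 ≤ v) {t : ℝ} (ht : 0 ≤ t) (m : ℕ) :
    0 ≤ tau x v m t :=
  (hF _ _ (nonneg_prof hv ht _)).1 m (Finset.mem_range.mpr m.lt_succ_self)

lemma sig_monoOn (hMon : MonotoneRule x) (hv : 0 ≤ v) {n : ℕ} (hn : 0 < n) :
    MonotoneOn (sig x v n) (Set.Ici 0) := by
  intro t₁ h₁ t₂ _ h12
  have h := hMon (Finset.range n) 0 (Finset.mem_range.mpr hn) (prof 0 v)
    (nonneg_prof hv le_rfl _) t₁ t₂ h₁ h12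
  rwa [upd0, upd0] at h

lemma sig_intble (hMon : MonotoneRule x) (hv : 0 ≤ v) {n : ℕ} (hn : 0 < n) {a b : ℝ} (ha : 0 ≤ a) (hab : a ≤ b) :
    IntervalIntegrable (sig x v n) MeasureTheory.volume a b := by
  apply MonotoneOn.intervalIntegrable
  apply (sig_monoOn x hMon hv hn).mono
  rw [Set.uIcc_of_le hab]
  exact fun t htt => le_trans ha htt.1


lemma util_eq (hMy : MyersonPay x p) (hv : 0 ≤ v) {u : ℝ} (hu : 0 ≤ u) {n : ℕ} (hn : 0 < n) :
    u * x (Finset.range n) (prof u v) 0 - p (Finset.range n) (prof u v) 0 = II x v n u := by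
  have h := hMy (Finset.range n) 0 (Finset.mem_range.mpr hn) (prof u v) (nonneg_prof hv hu _)
  rw [prof_zero] at h
  rw [h]
  simp only [upd0]
  unfold II sig
  ring

lemma tau_id (hNW : NonWasteful x) (hSym : SymmetricRule x) (hv : 0 ≤ v) {t : ℝ}
    (ht : 0 ≤ t) {m : ℕ} (hm : 1 ≤ m) :
    (m : ℝ) * tau x v m t + sig x v (m + 1) t = 1 := by
  classical
  have hm0 : m ≠ 0 := by omega
  have hnn := nonneg_prof hv ht (Finset.range (m + 1))
  have hmm : m ∈ Finset.range (m + 1) := Finset.mem_range.mpr m.lt_succ_self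
  have hsum := hNW (Finset.range (m + 1)) (prof t v)
    ⟨0, Finset.mem_range.mpr (Nat.succ_pos m)⟩ hnn
  have hx : ∀ j ∈ Finset.range (m + 1), j ≠ 0 →
      x (Finset.range (m + 1)) (prof t v) j = x (Finset.range (m + 1)) (prof t v) m := by
    intro j hj hj0
    by_cases hjm : j = m
    · rw [hjm]
    have hswap0 : (Equiv.swap j m) 0 = 0 :=
      Equiv.swap_apply_of_ne_of_ne (Ne.symm hj0) (Ne.symm hm0)
    have hπ : ∀ i, i ∈ Finset.range (m + 1) ↔ (Equiv.swap j m) i ∈ Finset.range (m + 1) := by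
      intro i
      by_cases h1 : i = j
      · subst h1
        rw [Equiv.swap_apply_left]
        simp only [hj, hmm]
      · by_cases h2 : i = m
        · subst h2
          rw [Equiv.swap_apply_right]
          simp only [hj, hmm]
        · rw [Equiv.swap_apply_of_ne_of_ne h1 h2]
    have hcomp : prof t v ∘ ⇑(Equiv.swap j m).symm = prof t v := by
      funext k
      simp only [Equiv.symm_swap, Function.comp_apply]
      by_cases hk : k = 0
      · subst hk
        rw [hswap0]
      · have hne : (Equiv.swap j m) k ≠ 0 := by
          intro h0
          have h1 : (Equiv.swap j m) k = (Equiv.swap j m) 0 := by rw [h0, hswap0]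
          exact hk ((Equiv.swap j m).injective h1)
        rw [prof_ne _ _ hne, prof_ne _ _ hk]
    have hs := hSym (Finset.range (m + 1)) (prof t v) hnn (Equiv.swap j m) hπ j hj
    rw [hcomp, Equiv.swap_apply_left] at hs
    exact hs
  have h2 : ∑ j ∈ Finset.range (m + 1), x (Finset.range (m + 1)) (prof t v) j
      = (∑ j ∈ Finset.range m, x (Finset.range (m + 1)) (prof t v) (j + 1))
        + x (Finset.range (m + 1)) (prof t v) 0 :=
    Finset.sum_range_succ' _ m
  have h3 : ∑ j ∈ Finset.range m, x (Finset.range (m + 1)) (prof t v) (j + 1)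
      = m * x (Finset.range (m + 1)) (prof t v) m := by
    rw [Finset.sum_congr rfl fun j hj =>
      hx (j + 1) (Finset.mem_range.mpr (by have := Finset.mem_range.mp hj; omega)) (Nat.succ_ne_zero j)]
    rw [Finset.sum_const, Finset.card_range, nsmul_eq_mul]
  rw [h2, h3] at hsum
  unfold tau sig
  linarith


lemma mtau_le_one (hF : Feasible x) (hNW : NonWasteful x) (hSym : SymmetricRule x)
    (hv : 0 ≤ v) {t : ℝ} (ht : 0 ≤ t) {m : ℕ} (hm : 1 ≤ m) :
    (m : ℝ) * tau x v m t ≤ 1 := by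
  have h := tau_id x hNW hSym hv ht hm
  have h2 := sig_nonneg x hF hv ht (n := m + 1) (Nat.succ_pos m)
  linarith

lemma tau_antiOn (hF : Feasible x) (hNW : NonWasteful x) (hSym : SymmetricRule x)
    (hMon : MonotoneRule x) (hv : 0 ≤ v) {m : ℕ} (hm : 1 ≤ m) :
    AntitoneOn (tau x v m) (Set.Ici 0) := by
  intro t₁ h₁ t₂ h₂ h12
  have e₁ := tau_id x hNW hSym hv h₁ hm
  have e₂ := tau_id x hNW hSym hv h₂ hm
  have hσ := sig_monoOn x hMon hv (n := m + 1) (Nat.succ_pos m) h₁ h₂ h12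
  have hmp : (0 : ℝ) < m := by exact_mod_cast Nat.pos_of_ne_zero (by omega)
  have : (m : ℝ) * tau x v m t₂ ≤ (m : ℝ) * tau x v m t₁ := by linarith
  exact le_of_mul_le_mul_left this hmp

lemma tau_intble (hF : Feasible x) (hNW : NonWasteful x) (hSym : SymmetricRule x)
    (hMon : MonotoneRule x) (hv : 0 ≤ v) {m : ℕ} (hm : 1 ≤ m) {a b : ℝ}
    (ha : 0 ≤ a) (hab : a ≤ b) :
    IntervalIntegrable (tau x v m) MeasureTheory.volume a b := by
  apply AntitoneOn.intervalIntegrable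
  apply (tau_antiOn x hF hNW hSym hMon hv hm).mono
  rw [Set.uIcc_of_le hab]
  exact fun t htt => le_trans ha htt.1

lemma II_nonneg (hF : Feasible x) (hv : 0 ≤ v) {b : ℝ} (hb : 0 ≤ b) {n : ℕ} (hn : 0 < n) :
    0 ≤ II x v n b :=
  intervalIntegral.integral_nonneg hb fun t htt => sig_nonneg x hF hv htt.1 hn

lemma II_le (hF : Feasible x) (hMon : MonotoneRule x) (hv : 0 ≤ v) {b : ℝ} (hb : 0 ≤ b)
    {n : ℕ} (hn : 0 < n) : II x v n b ≤ b := by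
  have h := intervalIntegral.integral_mono_on (μ := MeasureTheory.volume)
    (f := sig x v n) (g := fun _ => (1:ℝ)) hb
    (sig_intble x hMon hv hn le_rfl hb) intervalIntegrable_const
    (fun t htt => sig_le_one x hF hv htt.1 hn)
  simpa [II] using h

lemma chain (hF : Feasible x) (hMy : MyersonPay x p) (hSP : SybilProof x p)
    (hv : 0 ≤ v) {u : ℝ} (hvu : v ≤ u) {n : ℕ} (hn : 1 ≤ n) :
    II x v (n + 1) u + (u - v) * tau x v n u ≤ II x v n u := by
  have hu : 0 ≤ u := le_trans hv hvu
  have hn0 : n ≠ 0 := by omega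
  have hsp := hSP (Finset.range n) 0 (Finset.mem_range.mpr hn) n (by simp)
    (prof u v) (nonneg_prof hv hu _) v hv
  rw [prof_zero, ← Finset.range_add_one, updn _ _ hn0] at hsp
  have hL := util_eq x p hMy hv hu (n := n) hn
  have h0 := util_eq x p hMy hv hu (n := n + 1) (Nat.succ_pos n)
  have hpn := hMy (Finset.range (n + 1)) n (Finset.mem_range.mpr n.lt_succ_self)
    (prof u v) (nonneg_prof hv hu _)
  rw [prof_ne _ _ hn0] at hpn
  have hInt : 0 ≤ ∫ z in (0:ℝ)..v, x (Finset.range (n + 1)) (Function.update (prof u v) n z) n :=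
    intervalIntegral.integral_nonneg hv fun z hz =>
      (hF _ _ (nonneg_upd hv hu hz.1 n _)).1 n (Finset.mem_range.mpr n.lt_succ_self)
  have hτ : (u - v) * tau x v n u
      = u * x (Finset.range (n + 1)) (prof u v) n
        - v * x (Finset.range (n + 1)) (prof u v) n := by
    unfold tau; ring
  rw [mul_add] at hsp
  linarith

lemma tele (hF : Feasible x) (hMy : MyersonPay x p) (hSP : SybilProof x p)
    (hv : 0 ≤ v) {u : ℝ} (hvu : v ≤ u) :
    ∀ K : ℕ, II x v (K + 2) u + (u - v) * ∑ k ∈ Finset.range K, tau x v (k + 2) u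
      ≤ II x v 2 u := by
  intro K
  induction K with
  | zero => simp
  | succ K ih =>
    have hc := chain x p hF hMy hSP hv hvu (n := K + 2) (by omega)
    rw [Finset.sum_range_succ, mul_add]
    have : K + 1 + 2 = K + 2 + 1 := by omega
    rw [this]
    linarith


end SybilAux

/-- Lemma 2: in the two-bidder population, for `u ≥ v ≥ 0` the truthful utility of bidder `1`
(index `0`) satisfies `U_1(u,v) = ∫_0^u x_1(z,v) dz ≥ u − v`. -/
theorem two_bidder_utility_lower_bound (x p : Rule)
    (hF : Feasible x) (hNW : NonWasteful x) (hSym : SymmetricRule x)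
    (hMon : MonotoneRule x) (hMy : MyersonPay x p) (hZ : ZeroPayAtZero p)
    (hSP : SybilProof x p) (u v : ℝ) (hv : 0 ≤ v) (huv : v ≤ u) :
    u * x (Finset.range 2) (prof u v) 0 - p (Finset.range 2) (prof u v) 0 =
      (∫ z in (0:ℝ)..u, x (Finset.range 2) (prof z v) 0) ∧
    (∫ z in (0:ℝ)..u, x (Finset.range 2) (prof z v) 0) ≥ u - v := by
  classical
  have hu : 0 ≤ u := le_trans hv huv
  have hIuv : SybilAux.II x v 2 u = ∫ z in (0:ℝ)..u, x (Finset.range 2) (prof z v) 0 := rfl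
  constructor
  · rw [← hIuv]
    exact SybilAux.util_eq x p hMy hv hu (by norm_num)
  rw [ge_iff_le, ← hIuv]
  rcases eq_or_lt_of_le huv with heq | hlt
  · have h0 := SybilAux.II_nonneg x hF hv hu (n := 2) (by norm_num)
    linarith
  -- main case : v < u
  refine le_of_forall_pos_le_add fun ε hε => ?_
  obtain ⟨η, hη0, hηε, hηuv⟩ : ∃ η : ℝ, 0 < η ∧ η ≤ ε/2 ∧ η ≤ u - v :=
    ⟨min (ε/2) (u - v), lt_min (by linarith) (by linarith), min_le_left _ _, min_le_right _ _⟩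
  obtain ⟨a, hadef⟩ : ∃ a : ℝ, a = v + η := ⟨_, rfl⟩
  have hva : v < a := by rw [hadef]; linarith
  have hau : a ≤ u := by rw [hadef]; linarith
  have ha0 : 0 ≤ a := by linarith
  obtain ⟨M, hMdef⟩ : ∃ M : ℝ, M = 1 + v / η := ⟨_, rfl⟩
  have hvη : 0 ≤ v / η := div_nonneg hv hη0.le
  have hM1 : (1:ℝ) ≤ M := by rw [hMdef]; linarith
  have itau : ∀ (k : ℕ) {c d : ℝ}, 0 ≤ c → c ≤ d →
      IntervalIntegrable (SybilAux.tau x v (k+2)) MeasureTheory.volume c d :=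
    fun k _ _ hc hcd => SybilAux.tau_intble x hF hNW hSym hMon hv (by omega) hc hcd
  -- pointwise bound on partial sums of tau on [a, u]
  have key : ∀ K : ℕ, ∀ t ∈ Set.Icc a u,
      (∑ k ∈ Finset.range K, SybilAux.tau x v (k+2) t) ≤ M := by
    intro K t htt
    have hvt : v < t := lt_of_lt_of_le hva htt.1
    have h0t : 0 ≤ t := le_trans hv hvt.le
    have htele := SybilAux.tele x p hF hMy hSP hv hvt.le K
    have h1 : 0 ≤ SybilAux.II x v (K+2) t := SybilAux.II_nonneg x hF hv h0t (by omega)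
    have h2 : SybilAux.II x v 2 t ≤ t := SybilAux.II_le x hF hMon hv h0t (by norm_num)
    have h3 : (t - v) * (∑ k ∈ Finset.range K, SybilAux.tau x v (k+2) t) ≤ t := by linarith
    have hηt : η ≤ t - v := by
      have := htt.1; rw [hadef] at this; linarith
    have h5b : η * (v/η) = v := by
      rw [mul_comm]; exact div_mul_cancel₀ v hη0.ne'
    have h5 : v ≤ (t - v) * (v / η) := by
      have := mul_le_mul_of_nonneg_right hηt hvη
      linarith
    have h4 : t ≤ (t - v) * M := by
      have hexp : (t - v) * M = (t - v) + (t - v) * (v/η) := by rw [hMdef]; ring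
      rw [hexp]
      linarith
    exact le_of_mul_le_mul_left (le_trans h3 h4) (by linarith)
  -- integral bound on partial sums
  have hsum_int : ∀ K : ℕ,
      (∑ k ∈ Finset.range K, ∫ t in a..u, SybilAux.tau x v (k+2) t) ≤ (u - a) * M := by
    intro K
    rw [← intervalIntegral.integral_finset_sum (fun k _ => itau k ha0 hau)]
    have hs_int : IntervalIntegrable (fun t => ∑ k ∈ Finset.range K, SybilAux.tau x v (k+2) t)
        MeasureTheory.volume a u := by
      have := IntervalIntegrable.sum (μ := MeasureTheory.volume) (a := a) (b := u)
        (Finset.range K) (f := fun k => SybilAux.tau x v (k+2)) (fun k _ => itau k ha0 hau)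
      rwa [Finset.sum_fn] at this
    have hmono := intervalIntegral.integral_mono_on (μ := MeasureTheory.volume)
      (f := fun t => ∑ k ∈ Finset.range K, SybilAux.tau x v (k+2) t)
      (g := fun _ => M) hau hs_int intervalIntegrable_const (key K)
    rw [intervalIntegral.integral_const, smul_eq_mul] at hmono
    exact hmono
  -- choose K by divergence of the harmonic series
  obtain ⟨K, hK⟩ : ∃ K : ℕ, (u - a) * M < (ε/4) * ∑ k ∈ Finset.range K, (1/((k:ℝ)+1)) := by
    have h2 : Filter.Tendsto (fun n => (ε/4) * ∑ i ∈ Finset.range n, (1/((i:ℝ)+1)))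
        Filter.atTop Filter.atTop :=
      Filter.Tendsto.const_mul_atTop (by linarith) Real.tendsto_sum_range_one_div_nat_succ_atTop
    exact (h2.eventually_gt_atTop _).exists
  -- find a good sybil level k
  obtain ⟨k, hk⟩ : ∃ k : ℕ, ((k:ℝ)+2) * ∫ t in a..u, SybilAux.tau x v (k+2) t ≤ ε/2 := by
    by_contra hcon
    push_neg at hcon
    have hlow : (ε/4) * ∑ k ∈ Finset.range K, (1/((k:ℝ)+1))
        ≤ ∑ k ∈ Finset.range K, ∫ t in a..u, SybilAux.tau x v (k+2) t := by
      rw [Finset.mul_sum]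
      apply Finset.sum_le_sum
      intro k _
      have hconk := hcon k
      have hint0 : 0 ≤ ∫ t in a..u, SybilAux.tau x v (k+2) t :=
        intervalIntegral.integral_nonneg hau
          (fun t htt => SybilAux.tau_nonneg x hF hv (le_trans ha0 htt.1) _)
      have hk1 : (0:ℝ) < (k:ℝ)+1 := by positivity
      have hstep : ((k:ℝ)+2) * (∫ t in a..u, SybilAux.tau x v (k+2) t)
          ≤ 2*((k:ℝ)+1) * ∫ t in a..u, SybilAux.tau x v (k+2) t :=
        mul_le_mul_of_nonneg_right (by linarith) hint0
      rw [mul_one_div, div_le_iff₀ hk1]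
      nlinarith
    have := hsum_int K
    linarith
  -- final estimate with m = k + 2
  have hτva : IntervalIntegrable (SybilAux.tau x v (k+2)) MeasureTheory.volume v a :=
    itau k hv hva.le
  have hτau : IntervalIntegrable (SybilAux.tau x v (k+2)) MeasureTheory.volume a u :=
    itau k ha0 hau
  have hτvu : IntervalIntegrable (SybilAux.tau x v (k+2)) MeasureTheory.volume v u :=
    itau k hv huv
  have hIm : SybilAux.II x v (k+3) u ≤ SybilAux.II x v 2 u := by
    have htele := SybilAux.tele x p hF hMy hSP hv huv (k+1)
    have hsumnn : 0 ≤ ∑ j ∈ Finset.range (k+1), SybilAux.tau x v (j+2) u :=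
      Finset.sum_nonneg fun j _ => SybilAux.tau_nonneg x hF hv hu _
    have hrw : k + 1 + 2 = k + 3 := by omega
    rw [hrw] at htele
    nlinarith [mul_nonneg (by linarith : (0:ℝ) ≤ u - v) hsumnn]
  have hsplit : SybilAux.II x v (k+3) u
      = (∫ t in (0:ℝ)..v, SybilAux.sig x v (k+3) t) + ∫ t in v..u, SybilAux.sig x v (k+3) t := by
    unfold SybilAux.II
    rw [← intervalIntegral.integral_add_adjacent_intervals
      (SybilAux.sig_intble x hMon hv (by omega) le_rfl hv)
      (SybilAux.sig_intble x hMon hv (by omega) hv huv)]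
  have h0v : 0 ≤ ∫ t in (0:ℝ)..v, SybilAux.sig x v (k+3) t :=
    intervalIntegral.integral_nonneg hv fun t htt => SybilAux.sig_nonneg x hF hv htt.1 (by omega)
  have hcongr : Set.EqOn (SybilAux.sig x v (k+3))
      (fun t => 1 - ((k:ℝ)+2) * SybilAux.tau x v (k+2) t) (Set.uIcc v u) := by
    intro t htt
    rw [Set.uIcc_of_le huv] at htt
    have h0t : 0 ≤ t := le_trans hv htt.1
    have hid := SybilAux.tau_id x hNW hSym hv h0t (m := k+2) (by omega)
    push_cast at hid
    have hrw : k + 2 + 1 = k + 3 := by omega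
    rw [hrw] at hid
    simp only []
    linarith
  have heqint : (∫ t in v..u, SybilAux.sig x v (k+3) t)
      = (u - v) - ((k:ℝ)+2) * ∫ t in v..u, SybilAux.tau x v (k+2) t := by
    rw [intervalIntegral.integral_congr hcongr]
    rw [intervalIntegral.integral_sub intervalIntegrable_const (hτvu.const_mul _)]
    rw [intervalIntegral.integral_const_mul, intervalIntegral.integral_const, smul_eq_mul, mul_one]
  have hpart1 : ((k:ℝ)+2) * (∫ t in v..a, SybilAux.tau x v (k+2) t) ≤ η := by
    rw [← intervalIntegral.integral_const_mul]
    have hle : (∫ t in v..a, ((k:ℝ)+2) * SybilAux.tau x v (k+2) t) ≤ ∫ _ in v..a, (1:ℝ) :=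
      intervalIntegral.integral_mono_on (μ := MeasureTheory.volume)
        (f := fun t => ((k:ℝ)+2) * SybilAux.tau x v (k+2) t) (g := fun _ => (1:ℝ))
        hva.le (hτva.const_mul _) intervalIntegrable_const
        (fun t htt => by
          have h0t : 0 ≤ t := le_trans hv htt.1
          have := SybilAux.mtau_le_one x hF hNW hSym hv h0t (m := k+2) (by omega)
          push_cast at this
          exact this)
    rw [intervalIntegral.integral_const, smul_eq_mul, mul_one] at hle
    have haη : a - v = η := by rw [hadef]; ring
    linarith
  have hsplitτ : (∫ t in v..u, SybilAux.tau x v (k+2) t)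
      = (∫ t in v..a, SybilAux.tau x v (k+2) t) + ∫ t in a..u, SybilAux.tau x v (k+2) t :=
    (intervalIntegral.integral_add_adjacent_intervals hτva hτau).symm
  have hdist : ((k:ℝ)+2) * (∫ t in v..u, SybilAux.tau x v (k+2) t)
      = ((k:ℝ)+2) * (∫ t in v..a, SybilAux.tau x v (k+2) t)
        + ((k:ℝ)+2) * ∫ t in a..u, SybilAux.tau x v (k+2) t := by
    rw [hsplitτ]; ring
  linarith
end
end

section
/- Let (x,p) be a mechanism satisfying non-wastefulness, symmetry, monotonicity, Myerson payments and sybil-proofness. Then for any u > v ≥ 0 and any n ≥ 2, bidder 1's truthful utility satisfies U_1(u, v_{[2,n]}) ≥ U_1(u, v_{[2,n+1]}) + (u − v)·(1/n)·(1 − x_1(u, v_{[2,n+1]})), where U_1(u, v_{[2,n]}) = ∫_0^u x_1(z, v_{[2,n]}) dz is bidder 1's utility under truthful bidding against n−1 bidders each bidding v. -/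
open MeasureTheory Finset
open scoped Classical

noncomputable section

lemma prof_swap (u v : ℝ) {k n : ℕ} (hk : k ≠ 0) (hn : n ≠ 0) :
    prof u v ∘ ⇑(Equiv.swap k n) = prof u v := by
  funext m
  rcases eq_or_ne m 0 with rfl | hm
  · simp [Equiv.swap_apply_of_ne_of_ne (Ne.symm hk) (Ne.symm hn)]
  · have h1 : Equiv.swap k n m ≠ 0 := by
      intro h
      apply hm
      have h0 : Equiv.swap k n 0 = 0 :=
        Equiv.swap_apply_of_ne_of_ne (Ne.symm hk) (Ne.symm hn)
      exact (Equiv.swap k n).injective (h.trans h0.symm)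
    simp only [Function.comp_apply, prof, if_neg h1, if_neg hm]

/-- Inequality (2): `U_1(u, v_[2,n]) ≥ U_1(u, v_[2,n+1]) + (u−v)·(1/n)·(1 − x_1(u, v_[2,n+1]))`
for `u > v ≥ 0` and `n ≥ 2`, where bidder `1` is index `0` and the population of size `n`
is `{0, …, n−1}`. -/
theorem utility_sybil_recursion (x p : Rule)
    (hF : Feasible x) (hNW : NonWasteful x) (hSym : SymmetricRule x)
    (hMon : MonotoneRule x) (hMy : MyersonPay x p) (hZ : ZeroPayAtZero p)
    (hSP : SybilProof x p) (u v : ℝ) (hv : 0 ≤ v) (huv : v < u)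
    (n : ℕ) (hn : 2 ≤ n) :
    (∫ z in (0:ℝ)..u, x (Finset.range n) (prof z v) 0) ≥
      (∫ z in (0:ℝ)..u, x (Finset.range (n+1)) (prof z v) 0) +
        (u - v) * (1 / (n : ℝ)) * (1 - x (Finset.range (n+1)) (prof u v) 0) := by
  have hu0 : (0:ℝ) ≤ u := hv.trans huv.le
  have hnne : n ≠ 0 := by omega
  have hwnn : ∀ M : Finset ℕ, NonnegOn M (prof u v) := by
    intro M i _
    unfold prof
    split <;> assumption
  have h0N : 0 ∈ Finset.range n := by simp; omega
  have h0N' : 0 ∈ Finset.range (n+1) := by simp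
  have hnN' : n ∈ Finset.range (n+1) := by simp
  have hnnotN : n ∉ Finset.range n := by simp
  have h0 : prof u v 0 = u := by simp [prof]
  have hwn : prof u v n = v := by simp [prof, hnne]
  have hupdn : Function.update (prof u v) n v = prof u v := by
    funext k
    rcases eq_or_ne k n with rfl | h
    · simp [prof, hnne]
    · rw [Function.update_of_ne h]
  have hupd0 : ∀ z : ℝ, Function.update (prof u v) 0 z = prof z v := by
    intro z
    funext k
    rcases eq_or_ne k 0 with rfl | hk
    · simp [prof]
    · simp [Function.update_of_ne hk, prof, hk]
  -- Sybil-proofness instance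
  have hsp := hSP (Finset.range n) 0 h0N n hnnotN (prof u v) (hwnn _) v hv
  rw [hupdn, ← Finset.range_add_one, h0] at hsp
  -- Myerson payments
  have hmyN := hMy (Finset.range n) 0 h0N (prof u v) (hwnn _)
  rw [h0] at hmyN
  simp only [hupd0] at hmyN
  have hmyN'0 := hMy (Finset.range (n+1)) 0 h0N' (prof u v) (hwnn _)
  rw [h0] at hmyN'0
  simp only [hupd0] at hmyN'0
  have hmyN'n := hMy (Finset.range (n+1)) n hnN' (prof u v) (hwnn _)
  rw [hwn] at hmyN'n
  -- the leftover integral is nonnegative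
  have hJ : 0 ≤ ∫ z in (0:ℝ)..v,
      x (Finset.range (n+1)) (Function.update (prof u v) n z) n := by
    apply intervalIntegral.integral_nonneg hv
    intro z hz
    have hnn : NonnegOn (Finset.range (n+1)) (Function.update (prof u v) n z) := by
      intro i hi
      rcases eq_or_ne i n with rfl | h
      · simpa using hz.1
      · rw [Function.update_of_ne h]
        exact hwnn _ i hi
    exact (hF _ _ hnn).1 n hnN'
  -- symmetry among bidders 1..n
  have hsymk : ∀ k, 1 ≤ k → k ≤ n →
      x (Finset.range (n+1)) (prof u v) k = x (Finset.range (n+1)) (prof u v) n := by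
    intro k hk1 hkn
    rcases eq_or_ne k n with rfl | h
    · rfl
    have hk0 : k ≠ 0 := by omega
    have hmem : ∀ i, i ∈ Finset.range (n+1) ↔ Equiv.swap k n i ∈ Finset.range (n+1) := by
      intro i
      rcases eq_or_ne i k with rfl | hik
      · simp [Equiv.swap_apply_left, Finset.mem_range]; omega
      rcases eq_or_ne i n with rfl | hin
      · simp [Equiv.swap_apply_right, Finset.mem_range]; omega
      · rw [Equiv.swap_apply_of_ne_of_ne hik hin]
    have hkN' : k ∈ Finset.range (n+1) := by simp; omega
    have hs := hSym (Finset.range (n+1)) (prof u v) (hwnn _) (Equiv.swap k n) hmem k hkN'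
    rw [Equiv.swap_apply_left] at hs
    have hcomp : prof u v ∘ ⇑(Equiv.swap k n).symm = prof u v := by
      rw [Equiv.symm_swap]
      exact prof_swap u v hk0 hnne
    rw [hcomp] at hs
    exact hs
  -- non-wastefulness and symmetry pin down x_n
  have hNW1 : ∑ i ∈ Finset.range (n+1), x (Finset.range (n+1)) (prof u v) i = 1 :=
    hNW _ _ ⟨0, h0N'⟩ (hwnn _)
  rw [Finset.sum_range_succ'] at hNW1
  have hsum : ∑ i ∈ Finset.range n, x (Finset.range (n+1)) (prof u v) (i+1)
      = n * x (Finset.range (n+1)) (prof u v) n := by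
    rw [Finset.sum_congr rfl (fun i hi => hsymk (i+1) (by omega)
      (by simpa [Nat.succ_le_iff, Finset.mem_range] using hi))]
    simp [mul_comm]
  rw [hsum] at hNW1
  have hnR : (n:ℝ) ≠ 0 := Nat.cast_ne_zero.mpr hnne
  have hxn : x (Finset.range (n+1)) (prof u v) n
      = (1 - x (Finset.range (n+1)) (prof u v) 0) / n := by
    field_simp
    linarith
  have hkey : (u - v) * (1 / (n : ℝ)) * (1 - x (Finset.range (n+1)) (prof u v) 0)
      = (u - v) * x (Finset.range (n+1)) (prof u v) n := by
    rw [hxn]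
    field_simp
  rw [hkey]
  rw [hmyN, hmyN'0, hmyN'n] at hsp
  linarith
end
end

section
/- Let (x,p) be a mechanism satisfying non-wastefulness, symmetry, monotonicity, Myerson payments and sybil-proofness. Then for any u > v ≥ 0, bidder 1's two-bidder truthful utility satisfies U_1(u,v) ≥ (u − v)·Σ_{n=2}^{∞} (1/n)·(1 − x_1(u, v_{[2,n+1]})); in particular, this infinite series converges. -/
open MeasureTheory Finset
open scoped Classical

noncomputable section

/-- `U_1(u,v) ≥ (u−v)·∑_{n ≥ 2} (1/n)·(1 − x_1(u, v_[2,n+1]))` for `u > v ≥ 0`;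
in particular the series converges.  The series is indexed by `m : ℕ` via `n = m + 2`, and
`v_[2,n+1]` is the population of size `n + 1 = m + 3`. -/
theorem utility_lower_bound_series (x p : Rule)
    (hF : Feasible x) (hNW : NonWasteful x) (hSym : SymmetricRule x)
    (hMon : MonotoneRule x) (hMy : MyersonPay x p) (hZ : ZeroPayAtZero p)
    (hSP : SybilProof x p) (u v : ℝ) (hv : 0 ≤ v) (huv : v < u) :
    Summable (fun m : ℕ =>
      (1 / ((m : ℝ) + 2)) * (1 - x (Finset.range (m + 3)) (prof u v) 0)) ∧
    (∫ z in (0:ℝ)..u, x (Finset.range 2) (prof z v) 0) ≥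
      (u - v) * ∑' m : ℕ,
        (1 / ((m : ℝ) + 2)) * (1 - x (Finset.range (m + 3)) (prof u v) 0) := by

  have hu : (0:ℝ) ≤ u := le_trans hv huv.le
  have huv' : (0:ℝ) < u - v := by linarith
  -- profiles are nonnegative
  have hprof : ∀ a b : ℝ, 0 ≤ a → 0 ≤ b → ∀ N : Finset ℕ, NonnegOn N (prof a b) := by
    intro a b ha hb N i _
    simp only [prof]
    split <;> assumption
  -- all nonzero bidders get the same share under `prof a b`
  have hsymc : ∀ n : ℕ, ∀ a b : ℝ, 0 ≤ a → 0 ≤ b → ∀ j ∈ Finset.range (n+1), j ≠ 0 →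
      x (Finset.range (n+1)) (prof a b) j = x (Finset.range (n+1)) (prof a b) 1 := by
    intro n a b ha hb j hj hj0
    rcases eq_or_ne j 1 with rfl | hj1
    · rfl
    · have hjlt : j < n + 1 := Finset.mem_range.mp hj
      have h1 : (1:ℕ) ∈ Finset.range (n+1) := by
        simp only [Finset.mem_range]; omega
      have hmem : ∀ i : ℕ, i ∈ Finset.range (n+1) ↔ (Equiv.swap j 1) i ∈ Finset.range (n+1) := by
        intro i
        rw [Equiv.swap_apply_def]
        split_ifs with hij hi1
        · subst hij; simp only [Finset.mem_range]; omega
        · subst hi1; simp only [Finset.mem_range]; omega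
        · rfl
      have hswap := hSym (Finset.range (n+1)) (prof a b) (hprof a b ha hb _)
        (Equiv.swap j 1) hmem j hj
      have hfun : prof a b ∘ (Equiv.swap j 1).symm = prof a b := by
        funext i
        simp only [Function.comp, Equiv.symm_swap]
        rw [Equiv.swap_apply_def]
        split_ifs with hij hi1
        · subst hij; simp [prof, hj0]
        · subst hi1; simp [prof, hj0]
        · rfl
      rw [hfun, Equiv.swap_apply_left] at hswap
      exact hswap
  -- the share of a nonzero bidder
  have hshare : ∀ n : ℕ, 1 ≤ n → ∀ a b : ℝ, 0 ≤ a → 0 ≤ b → ∀ j ∈ Finset.range (n+1), j ≠ 0 →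
      (n : ℝ) * x (Finset.range (n+1)) (prof a b) j = 1 - x (Finset.range (n+1)) (prof a b) 0 := by
    intro n hn a b ha hb j hj hj0
    have hsum := hNW (Finset.range (n+1)) (prof a b) ⟨0, by simp⟩ (hprof a b ha hb _)
    have key : ∀ f : ℕ → ℝ, (∀ i ∈ Finset.range (n+1), i ≠ 0 → f i = f 1) →
        ∑ i ∈ Finset.range (n+1), f i = f 0 + (n:ℝ) * f 1 := by
      intro f hf
      rw [Finset.range_eq_Ico, Finset.sum_eq_sum_Ico_succ_bot (by omega : 0 < n + 1)]
      have : ∑ i ∈ Finset.Ico (0+1) (n+1), f i = ∑ i ∈ Finset.Ico (0+1) (n+1), f 1 := by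
        refine Finset.sum_congr rfl ?_
        intro i hi
        rw [Finset.mem_Ico] at hi
        exact hf i (Finset.mem_range.mpr hi.2) (by omega)
      rw [this, Finset.sum_const, Nat.card_Ico]
      simp only [Nat.add_sub_cancel, nsmul_eq_mul]
    have hkey := key (fun i => x (Finset.range (n+1)) (prof a b) i)
      (fun i hi hi0 => hsymc n a b ha hb i hi hi0)
    rw [hkey] at hsum
    rw [hsymc n a b ha hb j hj hj0]
    linarith
  -- abbreviations
  set g : ℕ → ℝ := fun m =>
    (1 / ((m : ℝ) + 2)) * (1 - x (Finset.range (m + 3)) (prof u v) 0) with hg_def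
  set f : ℕ → ℝ := fun m => ∫ z in (0:ℝ)..u, x (Finset.range (m + 2)) (prof z v) 0 with hf_def
  -- nonnegativity of f
  have hfnn : ∀ m : ℕ, 0 ≤ f m := by
    intro m
    apply intervalIntegral.integral_nonneg hu
    intro z hz
    exact (hF (Finset.range (m+2)) (prof z v) (hprof z v hz.1 hv _)).1 0 (by simp)
  -- g is nonnegative
  have hgnn : ∀ m : ℕ, 0 ≤ g m := by
    intro m
    have hmem0 : (0:ℕ) ∈ Finset.range (m+3) := by simp
    have hFm := hF (Finset.range (m+3)) (prof u v) (hprof u v hu hv _)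
    have hx1 : x (Finset.range (m+3)) (prof u v) 0 ≤ 1 := by
      calc x (Finset.range (m+3)) (prof u v) 0
          ≤ ∑ i ∈ Finset.range (m+3), x (Finset.range (m+3)) (prof u v) i :=
            Finset.single_le_sum (fun i hi => hFm.1 i hi) hmem0
        _ ≤ 1 := hFm.2
    have h2 : (0:ℝ) < (m:ℝ) + 2 := by positivity
    have : (0:ℝ) ≤ 1 - x (Finset.range (m+3)) (prof u v) 0 := by linarith
    simp only [hg_def]
    positivity
  -- update lemmas
  have hupd0 : ∀ a b z : ℝ, Function.update (prof a b) 0 z = prof z b := by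
    intro a b z
    funext k
    rw [Function.update_apply]
    rcases eq_or_ne k 0 with rfl | hk
    · simp [prof]
    · simp [prof, hk]
  have hupdn : ∀ a b : ℝ, ∀ n : ℕ, n ≠ 0 → Function.update (prof a b) n b = prof a b := by
    intro a b n hn
    funext k
    rw [Function.update_apply]
    rcases eq_or_ne k n with rfl | hk
    · simp [prof, hn]
    · simp [hk]
  -- the key inequality
  have hkey : ∀ m : ℕ, f m ≥ f (m+1) + (u - v) * g m := by
    intro m
    have h0mem : (0:ℕ) ∈ Finset.range (m+2) := by simp
    have hjnot : (m+2 : ℕ) ∉ Finset.range (m+2) := by simp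
    have hSPm := hSP (Finset.range (m+2)) 0 h0mem (m+2) hjnot (prof u v)
      (hprof u v hu hv _) v hv
    have hins : insert (m+2) (Finset.range (m+2)) = Finset.range (m+3) :=
      (Finset.range_add_one).symm
    have hupde : Function.update (prof u v) (m+2) v = prof u v := hupdn u v (m+2) (by omega)
    have hprof0 : prof u v 0 = u := by simp [prof]
    rw [hins, hupde, hprof0] at hSPm
    -- Myerson payments
    have hp1 := hMy (Finset.range (m+2)) 0 h0mem (prof u v) (hprof u v hu hv _)
    have hp2 := hMy (Finset.range (m+3)) 0 (by simp) (prof u v) (hprof u v hu hv _)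
    have hp3 := hMy (Finset.range (m+3)) (m+2) (by simp) (prof u v) (hprof u v hu hv _)
    rw [hprof0] at hp1 hp2
    have hprofn : prof u v (m+2) = v := by simp [prof]
    rw [hprofn] at hp3
    have hupdint : ∀ N : Finset ℕ, (fun z => x N (Function.update (prof u v) 0 z) 0)
        = fun z => x N (prof z v) 0 := by
      intro N; funext z; rw [hupd0]
    rw [hupdint] at hp1 hp2
    rw [hp1, hp2, hp3] at hSPm
    -- the sybil's integral is nonnegative
    have hI3 : 0 ≤ ∫ z in (0:ℝ)..v,
        x (Finset.range (m+3)) (Function.update (prof u v) (m+2) z) (m+2) := by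
      apply intervalIntegral.integral_nonneg hv
      intro z hz
      refine (hF (Finset.range (m+3)) (Function.update (prof u v) (m+2) z) ?_).1 (m+2) (by simp)
      intro i _
      rw [Function.update_apply]
      split
      · exact hz.1
      · simp only [prof]
        split
        · exact hu
        · exact hv
    -- share of the sybil
    have hB := hshare (m+2) (by omega) u v hu hv (m+2) (by simp) (by omega)
    have hm2 : ((m:ℝ) + 2) ≠ 0 := by positivity
    have hBval : x (Finset.range (m+3)) (prof u v) (m+2)
        = (1 / ((m:ℝ)+2)) * (1 - x (Finset.range (m+3)) (prof u v) 0) := by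
      push_cast at hB
      field_simp
      linarith
    simp only [hf_def, hg_def]
    have hcast : ((m+1) + 2 : ℕ) = m + 3 := by omega
    rw [hcast]
    have := hSPm
    rw [hBval] at this
    nlinarith [this, hI3]
  have htel : ∀ N : ℕ, f 0 ≥ f N + ∑ m ∈ Finset.range N, (u - v) * g m := by
    intro N
    induction N with
    | zero => simp
    | succ N ih =>
      rw [Finset.sum_range_succ]
      have := hkey N
      linarith
  have hbound : ∀ N : ℕ, ∑ m ∈ Finset.range N, g m ≤ f 0 / (u - v) := by
    intro N
    have h1 := htel N
    have h2 := hfnn N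
    have h3 : (u - v) * ∑ m ∈ Finset.range N, g m ≤ f 0 := by
      rw [Finset.mul_sum]; linarith
    rw [le_div_iff₀ huv']
    linarith [h3]
  have hsummable : Summable g := summable_of_sum_range_le hgnn hbound
  refine ⟨hsummable, ?_⟩
  have htsum : ∑' m, g m ≤ f 0 / (u - v) := Summable.tsum_le_of_sum_range_le hsummable hbound
  have : (u - v) * ∑' m, g m ≤ f 0 := by
    rw [← le_div_iff₀' huv']
    exact htsum
  simpa [hf_def] using this
end
end

section
/- Let x be a two-bidder allocation rule satisfying non-wastefulness, symmetry and monotonicity, with payments given by the Myerson formula, and let U_1(u,v) = ∫_0^u x_1(z,v) dz. Then for every u > 0, (1/u)·∫_0^u U_1(u,v) dv = u/2. -/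
open MeasureTheory Set

/-- A function on `ℝ²` monotone in the first variable, antitone in the second,
with values in `[0,1]`, is a.e. measurable. -/
theorem aemeasurable_of_monotone_antitone (f : ℝ → ℝ → ℝ)
    (hmono : ∀ v, Monotone fun z => f z v)
    (hanti : ∀ z, Antitone fun v => f z v)
    (h0 : ∀ z v, 0 ≤ f z v) (h1 : ∀ z v, f z v ≤ 1) :
    AEMeasurable (fun p : ℝ × ℝ => f p.1 p.2) (volume : Measure (ℝ × ℝ)) := by
  classical
  set gP : ℝ × ℝ → ℝ := fun p => ⨅ q : ℚ, if p.1 < (q : ℝ) then f q p.2 else 1 with hgP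
  set gM : ℝ × ℝ → ℝ := fun p => ⨆ q : ℚ, if (q : ℝ) < p.1 then f q p.2 else 0 with hgM
  have hPmeas : Measurable gP := by
    apply Measurable.iInf
    intro q
    exact Measurable.ite (measurableSet_lt measurable_fst measurable_const)
      ((hanti (q : ℝ)).measurable.comp measurable_snd) measurable_const
  have hMmeas : Measurable gM := by
    apply Measurable.iSup
    intro q
    exact Measurable.ite (measurableSet_lt measurable_const measurable_fst)
      ((hanti (q : ℝ)).measurable.comp measurable_snd) measurable_const
  have hbddP : ∀ p : ℝ × ℝ, BddBelow (Set.range fun q : ℚ => if p.1 < (q : ℝ) then f q p.2 else 1) := by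
    intro p
    refine ⟨0, ?_⟩
    rintro x ⟨q, rfl⟩
    dsimp only
    split <;> [exact h0 _ _; norm_num]
  have hbddM : ∀ p : ℝ × ℝ, BddAbove (Set.range fun q : ℚ => if (q : ℝ) < p.1 then f q p.2 else 0) := by
    intro p
    refine ⟨1, ?_⟩
    rintro x ⟨q, rfl⟩
    dsimp only
    split <;> [exact h1 _ _; norm_num]
  have hfleP : ∀ p : ℝ × ℝ, f p.1 p.2 ≤ gP p := by
    intro p
    apply le_ciInf
    intro q
    split_ifs with h
    · exact hmono p.2 h.le
    · exact h1 _ _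
  have hMlef : ∀ p : ℝ × ℝ, gM p ≤ f p.1 p.2 := by
    intro p
    apply ciSup_le
    intro q
    split_ifs with h
    · exact hmono p.2 h.le
    · exact h0 _ _
  -- cross inequality
  have hcross : ∀ v z1 z2 : ℝ, z1 < z2 → gP (z1, v) ≤ gM (z2, v) := by
    intro v z1 z2 h
    obtain ⟨q, hq1, hq2⟩ := exists_rat_btwn h
    calc gP (z1, v) ≤ (if (z1, v).1 < (q : ℝ) then f q (z1, v).2 else 1) :=
          ciInf_le (hbddP _) q
      _ = f q v := by simp [hq1]
      _ = (if (q : ℝ) < (z2, v).1 then f q (z2, v).2 else 0) := by simp [hq2]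
      _ ≤ gM (z2, v) := le_ciSup (hbddM _) q
  have hD : MeasurableSet {p : ℝ × ℝ | gM p < gP p} :=
    measurableSet_lt hMmeas hPmeas
  have hslice : ∀ v : ℝ, Set.Countable {z : ℝ | gM (z, v) < gP (z, v)} := by
    intro v
    have hsub : {z : ℝ | gM (z, v) < gP (z, v)} ⊆
        ⋃ q : ℚ, {z : ℝ | gM (z, v) < (q : ℝ) ∧ (q : ℝ) < gP (z, v)} := by
      intro z hz
      simp only [Set.mem_setOf_eq] at hz
      obtain ⟨q, hq1, hq2⟩ := exists_rat_btwn hz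
      exact Set.mem_iUnion.2 ⟨q, hq1, hq2⟩
    refine Set.Countable.mono hsub (Set.countable_iUnion fun q => ?_)
    apply Set.Subsingleton.countable
    intro z1 h1' z2 h2'
    simp only [Set.mem_setOf_eq] at h1' h2'
    by_contra hne
    rcases lt_or_gt_of_ne hne with h | h
    · exact lt_irrefl _ ((h1'.2.trans_le (hcross v z1 z2 h)).trans h2'.1)
    · exact lt_irrefl _ ((h2'.2.trans_le (hcross v z2 z1 h)).trans h1'.1)
  have hDnull : (volume : Measure (ℝ × ℝ)) {p : ℝ × ℝ | gM p < gP p} = 0 := by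
    rw [Measure.volume_eq_prod, Measure.prod_apply_symm hD]
    have : ∀ v : ℝ, (volume : Measure ℝ) ((fun z => (z, v)) ⁻¹' {p : ℝ × ℝ | gM p < gP p}) = 0 := by
      intro v
      exact Set.Countable.measure_zero (hslice v) _
    simp only [this, lintegral_zero]
  refine ⟨gP, hPmeas, ?_⟩
  refine measure_mono_null (fun p hp => ?_) hDnull
  simp only [Set.mem_setOf_eq] at hp ⊢
  exact lt_of_le_of_lt (hMlef p) (lt_of_le_of_ne (hfleP p) hp)

/-- For a two-bidder non-wasteful, symmetric, monotone allocation rule with Myerson payments,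
the average truthful utility of bidder `1` against a uniformly distributed opponent value on
`[0,u]` equals `u/2`: `(1/u)·∫_0^u U_1(u,v) dv = u/2`, where `U_1(u,v) = ∫_0^u x_1(z,v) dz`. -/
theorem average_utility_eq_half (x1 x2 : ℝ → ℝ → ℝ)
    (hnonneg : ∀ a b : ℝ, 0 ≤ a → 0 ≤ b → 0 ≤ x1 a b ∧ 0 ≤ x2 a b)
    (hNW : ∀ a b : ℝ, 0 ≤ a → 0 ≤ b → x1 a b + x2 a b = 1)
    (hSym : ∀ a b : ℝ, 0 ≤ a → 0 ≤ b → x1 a b = x2 b a)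
    (hMon1 : ∀ b : ℝ, 0 ≤ b → MonotoneOn (fun a => x1 a b) (Set.Ici (0:ℝ)))
    (hMon2 : ∀ a : ℝ, 0 ≤ a → MonotoneOn (fun b => x2 a b) (Set.Ici (0:ℝ)))
    (u : ℝ) (hu : 0 < u) :
    (1 / u) * (∫ v in (0:ℝ)..u, ∫ z in (0:ℝ)..u, x1 z v) = u / 2 := by
  have h0u : (0:ℝ) ≤ u := hu.le
  set π : ℝ → ℝ := fun t => max 0 (min t u) with hπ
  have hπ0 : ∀ t, 0 ≤ π t := fun t => le_max_left _ _
  have hπmono : Monotone π := fun a b hab =>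
    max_le_max le_rfl (min_le_min hab le_rfl)
  have hπid : ∀ t, 0 ≤ t → t ≤ u → π t = t := by
    intro t h1 h2
    simp [hπ, min_eq_left h2, max_eq_right h1]
  set f : ℝ → ℝ → ℝ := fun z v => x1 (π z) (π v) with hf
  have hmono : ∀ v, Monotone fun z => f z v := by
    intro v a b hab
    exact hMon1 (π v) (hπ0 v) (hπ0 a) (hπ0 b) (hπmono hab)
  have h0 : ∀ z v, 0 ≤ f z v := fun z v => (hnonneg _ _ (hπ0 z) (hπ0 v)).1
  have hsum : ∀ z v, f z v + f v z = 1 := by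
    intro z v
    have := hSym (π v) (π z) (hπ0 v) (hπ0 z)
    simp only [hf]
    rw [this]
    exact hNW _ _ (hπ0 z) (hπ0 v)
  have h1 : ∀ z v, f z v ≤ 1 := by
    intro z v
    have := hsum z v
    nlinarith [h0 v z]
  have hanti : ∀ z, Antitone fun v => f z v := by
    intro z a b hab
    have ha := hsum z a
    have hb := hsum z b
    have : f a z ≤ f b z := hmono z hab
    linarith
  -- replace x1 by f in the goal
  have hgoal : (∫ v in (0:ℝ)..u, ∫ z in (0:ℝ)..u, x1 z v)
      = ∫ v in (0:ℝ)..u, ∫ z in (0:ℝ)..u, f z v := by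
    apply intervalIntegral.integral_congr
    intro v hv
    rw [Set.uIcc_of_le h0u] at hv
    apply intervalIntegral.integral_congr
    intro z hz
    rw [Set.uIcc_of_le h0u] at hz
    simp only [hf, hπid z hz.1 hz.2, hπid v hv.1 hv.2]
  rw [hgoal]
  -- integrability
  have hFaem : AEMeasurable (fun p : ℝ × ℝ => f p.1 p.2) (volume : Measure (ℝ × ℝ)) :=
    aemeasurable_of_monotone_antitone f hmono hanti h0 h1
  have hsq : (volume : Measure (ℝ × ℝ)) (Set.Ioc 0 u ×ˢ Set.Ioc 0 u) ≠ ⊤ := by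
    rw [Measure.volume_eq_prod, Measure.prod_prod, Real.volume_Ioc]
    exact ENNReal.mul_ne_top ENNReal.ofReal_ne_top ENNReal.ofReal_ne_top
  have hFint : Integrable (Function.uncurry f)
      ((volume.restrict (Set.Ioc 0 u)).prod (volume.restrict (Set.Ioc 0 u))) := by
    rw [Measure.prod_restrict, ← Measure.volume_eq_prod]
    apply Measure.integrableOn_of_bounded (M := 1) hsq hFaem.aestronglyMeasurable
    filter_upwards with p
    rw [Real.norm_eq_abs, abs_le]
    exact ⟨by linarith [h0 p.1 p.2], h1 p.1 p.2⟩
  -- Fubini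
  have hswap : (∫ v in (0:ℝ)..u, ∫ z in (0:ℝ)..u, f z v)
      = ∫ z in (0:ℝ)..u, ∫ v in (0:ℝ)..u, f z v := by
    simp only [intervalIntegral.integral_of_le h0u]
    exact (integral_integral_swap hFint).symm
  -- inner identity
  set G : ℝ → ℝ := fun z => ∫ v in (0:ℝ)..u, f v z with hG
  have hGanti : Antitone G := by
    intro a b hab
    apply intervalIntegral.integral_mono_on h0u
      ((hmono b).intervalIntegrable) ((hmono a).intervalIntegrable)
    intro v _
    exact hanti v hab
  have hinner : ∀ z : ℝ, (∫ v in (0:ℝ)..u, f z v) = u - G z := by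
    intro z
    have : ∀ v : ℝ, f z v = 1 - f v z := by
      intro v
      have := hsum v z
      linarith
    rw [intervalIntegral.integral_congr (g := fun v => 1 - f v z)
      (fun v _ => this v)]
    rw [intervalIntegral.integral_sub (intervalIntegrable_const)
      ((hmono z).intervalIntegrable)]
    simp [hG]
  have key : (∫ v in (0:ℝ)..u, ∫ z in (0:ℝ)..u, f z v)
      = u * u - ∫ v in (0:ℝ)..u, ∫ z in (0:ℝ)..u, f z v := by
    calc (∫ v in (0:ℝ)..u, ∫ z in (0:ℝ)..u, f z v)
        = ∫ z in (0:ℝ)..u, ∫ v in (0:ℝ)..u, f z v := hswap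
      _ = ∫ z in (0:ℝ)..u, (u - G z) := by
          apply intervalIntegral.integral_congr
          intro z _
          exact hinner z
      _ = (∫ z in (0:ℝ)..u, u) - ∫ z in (0:ℝ)..u, G z := by
          exact intervalIntegral.integral_sub intervalIntegrable_const
            (hGanti.intervalIntegrable)
      _ = u * u - ∫ z in (0:ℝ)..u, G z := by
          rw [intervalIntegral.integral_const, sub_zero, smul_eq_mul]
      _ = u * u - ∫ v in (0:ℝ)..u, ∫ z in (0:ℝ)..u, f z v := rfl
  have : (∫ v in (0:ℝ)..u, ∫ z in (0:ℝ)..u, f z v) = u * u / 2 := by linarith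
  rw [this]
  field_simp
end

section
/- Let (x,p) be a mechanism satisfying non-wastefulness, symmetry, monotonicity, Myerson payments and sybil-proofness, and let U_1(u,v) = ∫_0^u x_1(z,v) dz be bidder 1's two-bidder truthful utility. Then for every u ≥ 0, U_1(u,u) = 0; that is, ∫_0^u x_1(z,u) dz = 0. -/
open MeasureTheory Finset
open scoped Classical

noncomputable section

/- ======================  auxiliary development  ====================== -/

structure Hyps (x p : Rule) : Prop where
  hF : Feasible x
  hNW : NonWasteful x
  hSym : SymmetricRule x
  hMon : MonotoneRule x
  hMy : MyersonPay x p
  hSP : SybilProof x p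

/-- bidder `0` bids `z`, bidders `1,…,n-1` bid `t`, everybody else bids `u`. -/
def Pp (u t : ℝ) (n : ℕ) (z : ℝ) : ℕ → ℝ :=
  fun k => if k = 0 then z else if k < n then t else u

lemma Pp_zero (u t : ℝ) (n : ℕ) (z : ℝ) : Pp u t n z 0 = z := by simp [Pp]

lemma Pp_at_n {n : ℕ} (hn : 1 ≤ n) (u t v : ℝ) : Pp u t (n+1) v n = t := by
  have h0 : n ≠ 0 := by omega
  simp [Pp, h0, Nat.lt_succ_self]

lemma nonnegOn_Pp {u t z : ℝ} (hu : 0 ≤ u) (ht : 0 ≤ t) (hz : 0 ≤ z)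
    (N : Finset ℕ) (n : ℕ) : NonnegOn N (Pp u t n z) := by
  intro i _
  unfold Pp
  split_ifs <;> assumption

lemma nonnegOn_update {N : Finset ℕ} {v : ℕ → ℝ} (h : NonnegOn N v) {i : ℕ} {z : ℝ}
    (hz : 0 ≤ z) : NonnegOn N (Function.update v i z) := by
  intro k hk
  rcases eq_or_ne k i with rfl | hne
  · simpa using hz
  · rw [Function.update_of_ne hne]; exact h k hk

lemma update_Pp_zero (u t : ℝ) (n : ℕ) (a z : ℝ) :
    Function.update (Pp u t n a) 0 z = Pp u t n z := by
  funext k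
  rcases eq_or_ne k 0 with rfl | h
  · simp [Pp]
  · rw [Function.update_of_ne h]
    simp [Pp, h]

lemma update_Pp_n {n : ℕ} (hn : 1 ≤ n) (u t v : ℝ) :
    Function.update (Pp u t n v) n t = Pp u t (n+1) v := by
  funext k
  rcases eq_or_ne k n with rfl | h
  · have h0 : k ≠ 0 := by omega
    simp [Pp, h0, Nat.lt_succ_self]
  · rw [Function.update_of_ne h]
    unfold Pp
    rcases eq_or_ne k 0 with rfl | h0
    · simp
    · simp only [if_neg h0]
      have : k < n ↔ k < n + 1 := by omega
      split_ifs with h1 h2 h2 <;> first | rfl | omega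

def phi (x : Rule) (u t : ℝ) (n : ℕ) (z : ℝ) : ℝ := x (Finset.range n) (Pp u t n z) 0

def Un (x : Rule) (u t : ℝ) (n : ℕ) (v : ℝ) : ℝ := ∫ z in (0:ℝ)..v, phi x u t n z

section Basic

variable {x p : Rule} (H : Hyps x p) {u t : ℝ} (hu : 0 ≤ u) (ht : 0 ≤ t)
include H hu ht

lemma phi_nonneg {n : ℕ} (hn : 1 ≤ n) {z : ℝ} (hz : 0 ≤ z) : 0 ≤ phi x u t n z :=
  (H.hF _ _ (nonnegOn_Pp hu ht hz _ _)).1 0 (Finset.mem_range.mpr hn)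

lemma phi_le_one {n : ℕ} (hn : 1 ≤ n) {z : ℝ} (hz : 0 ≤ z) : phi x u t n z ≤ 1 := by
  have h := H.hF (Finset.range n) (Pp u t n z) (nonnegOn_Pp hu ht hz _ _)
  calc phi x u t n z ≤ ∑ i ∈ Finset.range n, x (Finset.range n) (Pp u t n z) i :=
        Finset.single_le_sum (fun i hi => h.1 i hi) (Finset.mem_range.mpr hn)
    _ ≤ 1 := h.2

lemma phi_mono {n : ℕ} (hn : 1 ≤ n) {z₁ z₂ : ℝ} (h1 : 0 ≤ z₁) (h12 : z₁ ≤ z₂) :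
    phi x u t n z₁ ≤ phi x u t n z₂ := by
  have h := H.hMon (Finset.range n) 0 (Finset.mem_range.mpr hn) (Pp u t n 0)
    (nonnegOn_Pp hu ht le_rfl _ _) z₁ z₂ h1 h12
  rwa [update_Pp_zero, update_Pp_zero] at h

lemma phi_intInt {n : ℕ} (hn : 1 ≤ n) {a b : ℝ} (ha : 0 ≤ a) (hab : a ≤ b) :
    IntervalIntegrable (phi x u t n) volume a b := by
  apply MonotoneOn.intervalIntegrable
  intro z₁ hz₁ z₂ hz₂ h12
  rw [Set.uIcc_of_le hab] at hz₁
  exact phi_mono H hu ht hn (le_trans ha hz₁.1) h12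

lemma phi_one {z : ℝ} (hz : 0 ≤ z) : phi x u t 1 z = 1 := by
  have h := H.hNW (Finset.range 1) (Pp u t 1 z) ⟨0, by simp⟩ (nonnegOn_Pp hu ht hz _ _)
  simpa [Finset.sum_range_one, phi] using h

lemma Un_nonneg {n : ℕ} (hn : 1 ≤ n) {v : ℝ} (hv : 0 ≤ v) : 0 ≤ Un x u t n v :=
  intervalIntegral.integral_nonneg hv (fun z hz => phi_nonneg H hu ht hn hz.1)

lemma Un_one {v : ℝ} (hv : 0 ≤ v) : Un x u t 1 v = v := by
  unfold Un
  rw [intervalIntegral.integral_congr (g := fun _ => (1:ℝ))]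
  · simp
  · intro z hz
    rw [Set.uIcc_of_le hv] at hz
    exact phi_one H hu ht hz.1

lemma myerson_util {n : ℕ} (hn : 1 ≤ n) {v : ℝ} (hv : 0 ≤ v) :
    v * phi x u t n v - p (Finset.range n) (Pp u t n v) 0 = Un x u t n v := by
  have h := H.hMy (Finset.range n) 0 (Finset.mem_range.mpr hn) (Pp u t n v)
    (nonnegOn_Pp hu ht hv _ _)
  rw [Pp_zero] at h
  have hcong : (∫ z in (0:ℝ)..v, x (Finset.range n) (Function.update (Pp u t n v) 0 z) 0)
      = Un x u t n v := by
    unfold Un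
    apply intervalIntegral.integral_congr
    intro z _
    show x (Finset.range n) (Function.update (Pp u t n v) 0 z) 0 = phi x u t n z
    rw [update_Pp_zero]
    rfl
  rw [h, hcong]
  have hphi : phi x u t n v = x (Finset.range n) (Pp u t n v) 0 := rfl
  rw [hphi]
  ring

end Basic
section Star

variable {x p : Rule} (H : Hyps x p) {u t : ℝ} (hu : 0 ≤ u) (ht : 0 ≤ t)
include H hu ht

lemma shares_eq {n : ℕ} (hn : 1 ≤ n) {v : ℝ} (hv : 0 ≤ v) {i : ℕ}
    (hi : i ∈ Finset.range (n+1)) (hi0 : i ≠ 0) :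
    x (Finset.range (n+1)) (Pp u t (n+1) v) i
      = x (Finset.range (n+1)) (Pp u t (n+1) v) n := by
  rcases eq_or_ne i n with rfl | hin
  · rfl
  · have hiN : i < n + 1 := Finset.mem_range.mp hi
    set π : Equiv.Perm ℕ := Equiv.swap i n with hπ
    have hperm : ∀ k, k ∈ Finset.range (n+1) ↔ π k ∈ Finset.range (n+1) := by
      intro k
      simp only [hπ, Finset.mem_range, Equiv.swap_apply_def]
      split_ifs <;> omega
    have hprof : (Pp u t (n+1) v) ∘ π.symm = Pp u t (n+1) v := by
      funext k
      simp only [Function.comp, hπ, Equiv.symm_swap]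
      have e1 : Pp u t (n+1) v n = t := by
        unfold Pp; rw [if_neg (by omega), if_pos (by omega)]
      have e2 : Pp u t (n+1) v i = t := by
        unfold Pp; rw [if_neg hi0, if_pos (by omega)]
      rcases eq_or_ne k i with rfl | hki
      · rw [Equiv.swap_apply_left, e1, e2]
      · rcases eq_or_ne k n with rfl | hkn
        · rw [Equiv.swap_apply_right, e1, e2]
        · rw [Equiv.swap_apply_of_ne_of_ne hki hkn]
    have hs := H.hSym (Finset.range (n+1)) (Pp u t (n+1) v)
      (nonnegOn_Pp hu ht hv _ _) π hperm i hi
    rw [hprof] at hs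
    have hπi : π i = n := Equiv.swap_apply_left i n
    rw [hπi] at hs
    exact hs

lemma share_n_val {n : ℕ} (hn : 1 ≤ n) {v : ℝ} (hv : 0 ≤ v) :
    x (Finset.range (n+1)) (Pp u t (n+1) v) n = (1 - phi x u t (n+1) v) / n := by
  have hsum := H.hNW (Finset.range (n+1)) (Pp u t (n+1) v) ⟨0, by simp⟩
    (nonnegOn_Pp hu ht hv _ _)
  rw [Finset.sum_range_succ'] at hsum
  have hcong : ∀ i ∈ Finset.range n,
      x (Finset.range (n+1)) (Pp u t (n+1) v) (i+1)
        = x (Finset.range (n+1)) (Pp u t (n+1) v) n := by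
    intro i hi
    have hilt := Finset.mem_range.mp hi
    exact shares_eq H hu ht hn hv
      (Finset.mem_range.mpr (by omega : i + 1 < n + 1)) (by omega)
  rw [Finset.sum_congr rfl hcong, Finset.sum_const, Finset.card_range] at hsum
  have hφ : x (Finset.range (n+1)) (Pp u t (n+1) v) 0 = phi x u t (n+1) v := rfl
  rw [hφ] at hsum
  have hnne : (n:ℝ) ≠ 0 := by positivity
  rw [nsmul_eq_mul] at hsum
  rw [eq_div_iff hnne]
  linarith

end Star
section Chain

variable {x p : Rule} (H : Hyps x p) {u t : ℝ} (hu : 0 ≤ u) (ht : 0 ≤ t)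
include H hu ht

/-- The key sybil inequality: adding a sybil bidding `t` next to `n-1` opponents at `t`. -/
lemma star {n : ℕ} (hn : 1 ≤ n) {v : ℝ} (hv : t ≤ v) :
    Un x u t n v ≥ Un x u t (n+1) v + (v - t) * ((1 - phi x u t (n+1) v) / n) := by
  have hv0 : 0 ≤ v := le_trans ht hv
  have key := H.hSP (Finset.range n) 0 (Finset.mem_range.mpr hn) n
    Finset.notMem_range_self (Pp u t n v) (nonnegOn_Pp hu ht hv0 _ _) t ht
  rw [← Finset.range_add_one, update_Pp_n hn, Pp_zero] at key
  -- left side = Un n v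
  have hL : v * x (Finset.range n) (Pp u t n v) 0 - p (Finset.range n) (Pp u t n v) 0
      = Un x u t n v := myerson_util H hu ht hn hv0
  -- bidder 0's term at level n+1
  have h0 : v * x (Finset.range (n+1)) (Pp u t (n+1) v) 0
      - p (Finset.range (n+1)) (Pp u t (n+1) v) 0 = Un x u t (n+1) v :=
    myerson_util H hu ht (by omega) hv0
  -- sybil's payment
  have hpn := H.hMy (Finset.range (n+1)) n (Finset.self_mem_range_succ n)
    (Pp u t (n+1) v) (nonnegOn_Pp hu ht hv0 _ _)
  rw [Pp_at_n hn] at hpn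
  have hInt : 0 ≤ ∫ z in (0:ℝ)..t,
      x (Finset.range (n+1)) (Function.update (Pp u t (n+1) v) n z) n := by
    apply intervalIntegral.integral_nonneg ht
    intro z hz
    exact (H.hF _ _ (nonnegOn_update (nonnegOn_Pp hu ht hv0 _ _) hz.1)).1 n
      (Finset.self_mem_range_succ n)
  have hxn := share_n_val H hu ht hn hv0
  set Xn := x (Finset.range (n+1)) (Pp u t (n+1) v) n with hXn
  have : Un x u t n v ≥ Un x u t (n+1) v + (v - t) * Xn := by
    have expand : v * (x (Finset.range (n+1)) (Pp u t (n+1) v) 0 + Xn)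
        - p (Finset.range (n+1)) (Pp u t (n+1) v) 0
        - p (Finset.range (n+1)) (Pp u t (n+1) v) n
        = Un x u t (n+1) v + (v - t) * Xn
          + ∫ z in (0:ℝ)..t,
              x (Finset.range (n+1)) (Function.update (Pp u t (n+1) v) n z) n := by
      rw [hpn]
      linarith [h0]
    rw [hL, expand] at key
    linarith
  rw [← hxn]
  exact this

lemma chain {n : ℕ} (hn : 2 ≤ n) {v : ℝ} (hv : t ≤ v) :
    Un x u t 2 v ≥ Un x u t n v := by
  have hv0 : 0 ≤ v := le_trans ht hv
  induction n, hn using Nat.le_induction with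
  | base => exact le_rfl
  | succ n hn ih =>
      refine le_trans ?_ ih
      have hs := star H hu ht (by omega : 1 ≤ n) hv
      have hterm : 0 ≤ (v - t) * ((1 - phi x u t (n+1) v) / n) := by
        apply mul_nonneg (by linarith)
        apply div_nonneg _ (by positivity)
        linarith [phi_le_one H hu ht (by omega : 1 ≤ n+1) hv0]
      linarith

lemma telescope {v : ℝ} (hv : t ≤ v) (N : ℕ) :
    v - Un x u t (N+1) v
      ≥ (v - t) * ∑ n ∈ Finset.range N, (1 - phi x u t (n+2) v) / (n+1) := by
  have hv0 : 0 ≤ v := le_trans ht hv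
  induction N with
  | zero => simp [Un_one H hu ht hv0]
  | succ N ih =>
      rw [Finset.sum_range_succ, mul_add]
      have hs := star H hu ht (by omega : 1 ≤ N+1) hv
      have : ((N:ℝ)+1) = ((N+1 : ℕ) : ℝ) := by push_cast; ring
      rw [this]
      linarith

lemma exists_phi_close {z : ℝ} (hz : t < z) {ε : ℝ} (hε : 0 < ε) :
    ∃ n, 2 ≤ n ∧ 1 - ε ≤ phi x u t n z := by
  by_contra hcon
  push_neg at hcon
  have hz0 : 0 ≤ z := le_trans ht hz.le
  have hbound : ∀ N, (z - t) * ∑ n ∈ Finset.range N, (1 - phi x u t (n+2) z) / (n+1) ≤ z := by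
    intro N
    have h1 := telescope H hu ht hz.le N
    have h2 := Un_nonneg H hu ht (by omega : 1 ≤ N+1) hz0
    linarith
  have hterm : ∀ n : ℕ, ε * (1 / ((n:ℝ)+1)) ≤ (1 - phi x u t (n+2) z) / (n+1) := by
    intro n
    have := hcon (n+2) (by omega)
    rw [mul_one_div, div_le_div_iff_of_pos_right (by positivity : (0:ℝ) < (n:ℝ)+1)]
    linarith
  obtain ⟨N, hN⟩ := (Filter.tendsto_atTop.mp Real.tendsto_sum_range_one_div_nat_succ_atTop
    (z / (ε * (z - t)) + 1)).exists
  have hsum : ε * ∑ i ∈ Finset.range N, (1:ℝ) / (i+1)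
      ≤ ∑ n ∈ Finset.range N, (1 - phi x u t (n+2) z) / (n+1) := by
    rw [Finset.mul_sum]
    exact Finset.sum_le_sum fun n _ => hterm n
  have hzt : 0 < z - t := by linarith
  have hfinal := hbound N
  have : (z - t) * (ε * (z / (ε * (z - t)) + 1)) ≤ z := by
    calc (z - t) * (ε * (z / (ε * (z - t)) + 1))
        ≤ (z - t) * (ε * ∑ i ∈ Finset.range N, (1:ℝ) / (i+1)) := by
          apply mul_le_mul_of_nonneg_left _ hzt.le
          exact mul_le_mul_of_nonneg_left hN hε.le
      _ ≤ (z - t) * ∑ n ∈ Finset.range N, (1 - phi x u t (n+2) z) / (n+1) := by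
          apply mul_le_mul_of_nonneg_left hsum hzt.le
      _ ≤ z := hfinal
  have hexp : (z - t) * (ε * (z / (ε * (z - t)) + 1)) = z + ε * (z - t) := by
    field_simp
  rw [hexp] at this
  nlinarith

lemma Un2_ge {v : ℝ} (hv : t ≤ v) : v - t ≤ Un x u t 2 v := by
  have hv0 : 0 ≤ v := le_trans ht hv
  -- first: for every z with t < z ≤ v, we get v - z ≤ Un 2 v
  have hstep : ∀ z, t < z → z ≤ v → v - z ≤ Un x u t 2 v := by
    intro z hz hzv
    by_contra hlt
    push_neg at hlt
    have hz0 : 0 ≤ z := le_trans ht hz.le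
    have hvz : 0 < v - z := by
      have := Un_nonneg H hu ht (by omega : (1:ℕ) ≤ 2) hv0
      linarith
    set ε := ((v - z) - Un x u t 2 v) / (v - z) with hε
    have hεpos : 0 < ε := by
      apply div_pos _ hvz
      linarith
    obtain ⟨n, hn2, hφ⟩ := exists_phi_close H hu ht hz (half_pos hεpos)
    have h1 : Un x u t 2 v ≥ Un x u t n v := chain H hu ht hn2 hv
    have h2 : Un x u t n v ≥ (v - z) * phi x u t n z := by
      have hi1 : IntervalIntegrable (phi x u t n) volume 0 z :=
        phi_intInt H hu ht (by omega) le_rfl hz0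
      have hi2 : IntervalIntegrable (phi x u t n) volume z v :=
        phi_intInt H hu ht (by omega) hz0 hzv
      have hadd := intervalIntegral.integral_add_adjacent_intervals hi1 hi2
      have hp1 : 0 ≤ ∫ w in (0:ℝ)..z, phi x u t n w :=
        intervalIntegral.integral_nonneg hz0 (fun w hw => phi_nonneg H hu ht (by omega) hw.1)
      have hp2 : (v - z) * phi x u t n z ≤ ∫ w in z..v, phi x u t n w := by
        have hc : ∫ w in z..v, phi x u t n z = (v - z) * phi x u t n z := by
          rw [intervalIntegral.integral_const, smul_eq_mul]
        rw [← hc]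
        apply intervalIntegral.integral_mono_on hzv (intervalIntegrable_const) hi2
        intro w hw
        exact phi_mono H hu ht (by omega) hz0 hw.1
      unfold Un
      rw [← hadd]
      linarith
    have h3 : (v - z) * phi x u t n z ≥ (v - z) * (1 - ε/2) := by
      apply mul_le_mul_of_nonneg_left hφ hvz.le
    have hεle : ε ≤ 1 := by
      rw [hε, div_le_one hvz]
      have := Un_nonneg H hu ht (by omega : (1:ℕ) ≤ 2) hv0
      linarith
    have hkey : (v - z) * (1 - ε/2) > Un x u t 2 v := by
      have hexp : (v - z) * (1 - ε) = Un x u t 2 v := by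
        rw [hε]
        field_simp
        ring
      nlinarith
    linarith
  by_contra hcon
  push_neg at hcon
  have hUnn := Un_nonneg H hu ht (by omega : (1:ℕ) ≤ 2) hv0
  have hvt : 0 < v - t := by linarith
  set δ := (v - t - Un x u t 2 v) / 2 with hδ
  have hδpos : 0 < δ := by
    rw [hδ]; linarith
  rcases le_or_gt δ (v - t) with hcase | hcase
  · have := hstep (t + δ) (by linarith) (by linarith)
    rw [hδ] at this
    linarith
  · linarith

end Chain
/-- Two-bidder share of a bidder bidding `a` against an opponent bidding `b`
(all dummy coordinates fixed at `u`). -/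
def Gf (x : Rule) (u a b : ℝ) : ℝ := phi x u b 2 a

section Gsec

variable {x p : Rule} (H : Hyps x p) {u : ℝ} (hu : 0 ≤ u)
include H hu

lemma Gf_nonneg {a b : ℝ} (ha : 0 ≤ a) (hb : 0 ≤ b) : 0 ≤ Gf x u a b :=
  phi_nonneg H hu hb (by omega) ha

lemma Gf_mono_left {b : ℝ} (hb : 0 ≤ b) {a₁ a₂ : ℝ} (h1 : 0 ≤ a₁) (h12 : a₁ ≤ a₂) :
    Gf x u a₁ b ≤ Gf x u a₂ b :=
  phi_mono H hu hb (by omega) h1 h12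

lemma Gf_compl {a b : ℝ} (ha : 0 ≤ a) (hb : 0 ≤ b) : Gf x u a b + Gf x u b a = 1 := by
  -- second bidder's share at the profile (a, b, u, u, ...)
  have hswap : x (Finset.range 2) (Pp u b 2 a) 1 = Gf x u b a := by
    set π : Equiv.Perm ℕ := Equiv.swap 0 1 with hπ
    have hperm : ∀ k, k ∈ Finset.range 2 ↔ π k ∈ Finset.range 2 := by
      intro k
      simp only [hπ, Finset.mem_range, Equiv.swap_apply_def]
      split_ifs <;> omega
    have hs := H.hSym (Finset.range 2) (Pp u b 2 a) (nonnegOn_Pp hu hb ha _ _) π hperm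
      1 (by simp)
    have hπ1 : π 1 = 0 := Equiv.swap_apply_right 0 1
    have hprof : (Pp u b 2 a) ∘ π.symm = Pp u a 2 b := by
      funext k
      simp only [Function.comp, hπ, Equiv.symm_swap]
      rcases eq_or_ne k 0 with rfl | h0
      · rw [Equiv.swap_apply_left]
        simp [Pp]
      · rcases eq_or_ne k 1 with rfl | h1
        · rw [Equiv.swap_apply_right]
          simp [Pp]
        · rw [Equiv.swap_apply_of_ne_of_ne h0 h1]
          have h2 : ¬ k < 2 := by omega
          simp [Pp, h0, h1, h2]
    rw [hprof, hπ1] at hs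
    exact hs
  have hsum := H.hNW (Finset.range 2) (Pp u b 2 a) ⟨0, by simp⟩ (nonnegOn_Pp hu hb ha _ _)
  rw [show (2:ℕ) = 1 + 1 from rfl, Finset.sum_range_succ, Finset.sum_range_one] at hsum
  have h0 : x (Finset.range 2) (Pp u b 2 a) 0 = Gf x u a b := rfl
  rw [h0, hswap] at hsum
  exact hsum

lemma Gf_half {t : ℝ} (ht : 0 ≤ t) : Gf x u t t = 1/2 := by
  have := Gf_compl H hu ht ht
  linarith

lemma Gf_le_one {a b : ℝ} (ha : 0 ≤ a) (hb : 0 ≤ b) : Gf x u a b ≤ 1 :=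
  phi_le_one H hu hb (by omega) ha

/-- pointwise complement with the *same* profile (no symmetry needed). -/
lemma Gf_eq_one_sub {a b : ℝ} (ha : 0 ≤ a) (hb : 0 ≤ b) :
    Gf x u a b = 1 - x (Finset.range 2) (Pp u b 2 a) 1 := by
  have hsum := H.hNW (Finset.range 2) (Pp u b 2 a) ⟨0, by simp⟩ (nonnegOn_Pp hu hb ha _ _)
  rw [show (2:ℕ) = 1 + 1 from rfl, Finset.sum_range_succ, Finset.sum_range_one] at hsum
  have h0 : x (Finset.range 2) (Pp u b 2 a) 0 = Gf x u a b := rfl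
  rw [h0] at hsum
  linarith

lemma Gf_anti_right {a : ℝ} (ha : 0 ≤ a) {b₁ b₂ : ℝ} (h1 : 0 ≤ b₁) (h12 : b₁ ≤ b₂) :
    Gf x u a b₂ ≤ Gf x u a b₁ := by
  have hupd : ∀ c b : ℝ, Function.update (Pp u c 2 a) 1 b = Pp u b 2 a := by
    intro c b
    funext k
    rcases eq_or_ne k 1 with rfl | h1'
    · rw [Function.update_self]
      simp [Pp]
    · rw [Function.update_of_ne h1']
      rcases eq_or_ne k 0 with rfl | h0
      · simp [Pp]
      · have h2 : ¬ k < 2 := by omega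
        simp [Pp, h0, h2]
  have hm := H.hMon (Finset.range 2) 1 (by simp) (Pp u 0 2 a)
    (nonnegOn_Pp hu le_rfl ha _ _) b₁ b₂ h1 h12
  rw [hupd, hupd] at hm
  rw [Gf_eq_one_sub H hu ha h1, Gf_eq_one_sub H hu ha (le_trans h1 h12)]
  linarith

lemma Gf_intInt_left {b : ℝ} (hb : 0 ≤ b) {a₁ a₂ : ℝ} (h1 : 0 ≤ a₁) (h12 : a₁ ≤ a₂) :
    IntervalIntegrable (fun z => Gf x u z b) volume a₁ a₂ :=
  phi_intInt H hu hb (by omega) h1 h12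

lemma Gf_intInt_right {a : ℝ} (ha : 0 ≤ a) {b₁ b₂ : ℝ} (h1 : 0 ≤ b₁) (h12 : b₁ ≤ b₂) :
    IntervalIntegrable (fun y => Gf x u a y) volume b₁ b₂ := by
  apply AntitoneOn.intervalIntegrable
  intro y₁ hy₁ y₂ hy₂ hle
  rw [Set.uIcc_of_le h12] at hy₁
  exact Gf_anti_right H hu ha (le_trans h1 hy₁.1) hle

/-- `D t`: the sub-tie utility against an opponent at `t`. -/
lemma K5 {t Y : ℝ} (ht : 0 ≤ t) (htY : t ≤ Y) :
    (∫ y in t..Y, Gf x u t y) ≤ ∫ z in (0:ℝ)..t, Gf x u z t := by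
  have hY0 : 0 ≤ Y := le_trans ht htY
  have hphi : (fun z => Gf x u z t) = phi x u t 2 := rfl
  -- ∫_t^Y G(y,t) dy = Un 2 Y - Un 2 t
  have hadd := intervalIntegral.integral_add_adjacent_intervals
    (phi_intInt H hu ht (by omega : (1:ℕ) ≤ 2) le_rfl ht)
    (phi_intInt H hu ht (by omega : (1:ℕ) ≤ 2) ht htY)
  -- rewrite the integrand on [t, Y]
  have hcong : (∫ y in t..Y, Gf x u t y) = ∫ y in t..Y, (1 - phi x u t 2 y) := by
    apply intervalIntegral.integral_congr
    intro y hy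
    rw [Set.uIcc_of_le htY] at hy
    have hy0 : 0 ≤ y := le_trans ht hy.1
    have := Gf_compl H hu (le_trans ht hy.1 : (0:ℝ) ≤ y) ht
    have hG : Gf x u y t = phi x u t 2 y := rfl
    rw [hG] at this
    show Gf x u t y = 1 - phi x u t 2 y
    linarith
  have hsub : (∫ y in t..Y, (1 - phi x u t 2 y)) = (Y - t) - ∫ y in t..Y, phi x u t 2 y := by
    rw [intervalIntegral.integral_sub intervalIntegrable_const
      (phi_intInt H hu ht (by omega : (1:ℕ) ≤ 2) ht htY)]
    simp
  have hK4 := Un2_ge H hu ht (htY.trans' le_rfl : t ≤ Y)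
  have hUnY : Un x u t 2 Y = (∫ z in (0:ℝ)..t, phi x u t 2 z) + ∫ y in t..Y, phi x u t 2 y := by
    unfold Un
    rw [← hadd]
  rw [hcong, hsub]
  have hDt : (∫ z in (0:ℝ)..t, Gf x u z t) = ∫ z in (0:ℝ)..t, phi x u t 2 z := rfl
  rw [hDt]
  rw [hUnY] at hK4
  linarith

end Gsec
section Grid

variable {x p : Rule} (H : Hyps x p) {u : ℝ}
include H

lemma grid_bound (hu0 : 0 < u) {T : ℝ} (hT0 : 0 < T) (hTu : T < u) {m : ℕ} (hm : 1 ≤ m) :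
    (∫ z in (0:ℝ)..T, Gf x u z u) ≤ (T/m) * (T/2) / (u - T) := by
  have hu : (0:ℝ) ≤ u := hu0.le
  have hmR : (0:ℝ) < (m:ℝ) := by exact_mod_cast Nat.pos_of_ne_zero (by omega)
  set τ : ℕ → ℝ := fun i => (i : ℝ) * T / m with hτdef
  have hτ0 : τ 0 = 0 := by simp [hτdef]
  have hτm : τ m = T := by
    simp only [hτdef]
    field_simp
  have hτnn : ∀ i, 0 ≤ τ i := by
    intro i
    simp only [hτdef]
    positivity
  have hτmono : ∀ i j : ℕ, i ≤ j → τ i ≤ τ j := by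
    intro i j hij
    have hij' : (i:ℝ) ≤ (j:ℝ) := by exact_mod_cast hij
    simp only [hτdef]
    gcongr
  have hτleT : ∀ i : ℕ, i ≤ m → τ i ≤ T := by
    intro i hi
    rw [← hτm]
    exact hτmono i m hi
  have hτltu : ∀ i : ℕ, i ≤ m → τ i ≤ u := fun i hi => le_trans (hτleT i hi) hTu.le
  have hstep : ∀ i : ℕ, τ (i+1) - τ i = T/m := by
    intro i
    simp only [hτdef]
    push_cast
    ring
  -- per-slab lower bound on the tail integral of the loser's shares
  have hA : ∀ i ∈ Finset.range m,
      (u - T) * Gf x u (τ (i+1)) u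
        + ∑ j ∈ Finset.range m, (if i < j then (T/m) * Gf x u (τ (i+1)) (τ (j+1)) else 0)
      ≤ ∫ z in (0:ℝ)..(τ (i+1)), Gf x u z (τ (i+1)) := by
    intro i hi
    have him : i + 1 ≤ m := Finset.mem_range.mp hi
    have hP0 : 0 ≤ τ (i+1) := hτnn _
    have hPT : τ (i+1) ≤ T := hτleT _ him
    have hPu : τ (i+1) ≤ u := le_trans hPT hTu.le
    refine le_trans ?_ (K5 H hu hP0 hPu)
    -- split the integral ∫_{τ(i+1)}^u into ∫_{τ(i+1)}^T + ∫_T^u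
    have hadd := intervalIntegral.integral_add_adjacent_intervals
      (Gf_intInt_right H hu hP0 hP0 hPT) (Gf_intInt_right H hu hP0 hT0.le hTu.le)
    rw [← hadd]
    have hpart2 : (u - T) * Gf x u (τ (i+1)) u ≤ ∫ y in T..u, Gf x u (τ (i+1)) y := by
      have hc : ∫ y in T..u, Gf x u (τ (i+1)) u = (u - T) * Gf x u (τ (i+1)) u := by
        rw [intervalIntegral.integral_const, smul_eq_mul]
      rw [← hc]
      apply intervalIntegral.integral_mono_on hTu.le intervalIntegrable_const
        (Gf_intInt_right H hu hP0 hT0.le hTu.le)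
      intro y hy
      exact Gf_anti_right H hu hP0 (le_trans hT0.le hy.1) hy.2
    have hpart1 : (∑ j ∈ Finset.range m,
        (if i < j then (T/m) * Gf x u (τ (i+1)) (τ (j+1)) else 0))
        ≤ ∫ y in (τ (i+1))..T, Gf x u (τ (i+1)) y := by
      have hfilter : (Finset.range m).filter (fun j => i < j) = Finset.Ico (i+1) m := by
        ext j
        simp only [Finset.mem_filter, Finset.mem_range, Finset.mem_Ico]
        omega
      rw [← Finset.sum_filter, hfilter]
      have hslab : ∀ j ∈ Finset.Ico (i+1) m,
          (T/m) * Gf x u (τ (i+1)) (τ (j+1)) ≤ ∫ y in (τ j)..(τ (j+1)), Gf x u (τ (i+1)) y := by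
        intro j hj
        rw [Finset.mem_Ico] at hj
        have hjm : j + 1 ≤ m := hj.2
        have hj0 : 0 ≤ τ j := hτnn _
        have hjj : τ j ≤ τ (j+1) := hτmono _ _ (by omega)
        have hc : ∫ y in (τ j)..(τ (j+1)), Gf x u (τ (i+1)) (τ (j+1))
            = (T/m) * Gf x u (τ (i+1)) (τ (j+1)) := by
          rw [intervalIntegral.integral_const, smul_eq_mul, hstep j]
        rw [← hc]
        apply intervalIntegral.integral_mono_on hjj intervalIntegrable_const
          (Gf_intInt_right H hu hP0 hj0 hjj)
        intro y hy
        exact Gf_anti_right H hu hP0 (le_trans hj0 hy.1) hy.2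
      refine le_trans (Finset.sum_le_sum hslab) ?_
      -- the sum of adjacent integrals telescopes
      have hsum : (∑ j ∈ Finset.Ico (i+1) m, ∫ y in (τ j)..(τ (j+1)), Gf x u (τ (i+1)) y)
          = ∫ y in (τ (i+1))..(τ m), Gf x u (τ (i+1)) y := by
        rw [Finset.sum_Ico_eq_sum_range]
        have hint : ∀ k < m - (i+1),
            IntervalIntegrable (fun y => Gf x u (τ (i+1)) y) volume
              (τ (i+1+k)) (τ (i+1+k+1)) := by
          intro k hk
          exact Gf_intInt_right H hu hP0 (hτnn _) (hτmono _ _ (by omega))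
        have := intervalIntegral.sum_integral_adjacent_intervals
          (a := fun k => τ (i+1+k)) (n := m - (i+1)) (f := fun y => Gf x u (τ (i+1)) y) hint
        simp only [Nat.add_zero] at this
        rw [show i + 1 + (m - (i+1)) = m from by omega] at this
        exact this
      rw [hsum, hτm]
    linarith
  -- per-slab upper bound on the sub-tie utility
  have hB : ∀ i ∈ Finset.range m,
      (∫ z in (0:ℝ)..(τ (i+1)), Gf x u z (τ (i+1)))
        ≤ ∑ j ∈ Finset.range m, (if j < i then (T/m) * Gf x u (τ (j+1)) (τ (i+1)) else 0)
          + (T/m) * (1/2) := by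
    intro i hi
    have him : i + 1 ≤ m := Finset.mem_range.mp hi
    have hP0 : 0 ≤ τ (i+1) := hτnn _
    have hsplit : (∫ z in (0:ℝ)..(τ (i+1)), Gf x u z (τ (i+1)))
        = ∑ j ∈ Finset.range (i+1), ∫ z in (τ j)..(τ (j+1)), Gf x u z (τ (i+1)) := by
      have hint : ∀ k < i + 1,
          IntervalIntegrable (fun z => Gf x u z (τ (i+1))) volume (τ k) (τ (k+1)) := by
        intro k hk
        exact Gf_intInt_left H hu hP0 (hτnn _) (hτmono _ _ (by omega))
      have := intervalIntegral.sum_integral_adjacent_intervals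
        (a := τ) (n := i+1) (f := fun z => Gf x u z (τ (i+1))) hint
      rw [hτ0] at this
      exact this.symm
    rw [hsplit]
    have hslab : ∀ j ∈ Finset.range (i+1),
        (∫ z in (τ j)..(τ (j+1)), Gf x u z (τ (i+1)))
          ≤ (T/m) * Gf x u (τ (j+1)) (τ (i+1)) := by
      intro j hj
      have hj0 : 0 ≤ τ j := hτnn _
      have hjj : τ j ≤ τ (j+1) := hτmono _ _ (by omega)
      have hc : ∫ z in (τ j)..(τ (j+1)), Gf x u (τ (j+1)) (τ (i+1))
          = (T/m) * Gf x u (τ (j+1)) (τ (i+1)) := by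
        rw [intervalIntegral.integral_const, smul_eq_mul, hstep j]
      rw [← hc]
      apply intervalIntegral.integral_mono_on hjj
        (Gf_intInt_left H hu hP0 hj0 hjj) intervalIntegrable_const
      intro z hz
      exact Gf_mono_left H hu hP0 (le_trans hj0 hz.1) hz.2
    refine le_trans (Finset.sum_le_sum hslab) ?_
    rw [Finset.sum_range_succ]
    have hlast : Gf x u (τ (i+1)) (τ (i+1)) = 1/2 := Gf_half H hu hP0
    rw [hlast]
    have hfilter : (Finset.range m).filter (fun j => j < i) = Finset.range i := by
      ext j
      simp only [Finset.mem_filter, Finset.mem_range]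
      omega
    rw [← Finset.sum_filter, hfilter]
  -- sum the two families over i and cancel the double sums
  have hsum1 := Finset.sum_le_sum hA
  have hsum2 := Finset.sum_le_sum hB
  have hAB := le_trans hsum1 hsum2
  rw [Finset.sum_add_distrib, Finset.sum_add_distrib] at hAB
  have hswap : (∑ i ∈ Finset.range m, ∑ j ∈ Finset.range m,
        (if j < i then (T/m) * Gf x u (τ (j+1)) (τ (i+1)) else 0))
      = ∑ i ∈ Finset.range m, ∑ j ∈ Finset.range m,
        (if i < j then (T/m) * Gf x u (τ (i+1)) (τ (j+1)) else 0) := by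
    rw [Finset.sum_comm]
  rw [hswap] at hAB
  have hconst : (∑ _i ∈ Finset.range m, (T/m) * (1/2 : ℝ)) = T/2 := by
    rw [Finset.sum_const, Finset.card_range, nsmul_eq_mul]
    field_simp <;> ring
  rw [hconst] at hAB
  have hmain : (u - T) * ∑ i ∈ Finset.range m, Gf x u (τ (i+1)) u ≤ T/2 := by
    rw [Finset.mul_sum]
    linarith
  -- finally, bound the target integral by the grid sum
  have htarget : (∫ z in (0:ℝ)..T, Gf x u z u)
      ≤ ∑ i ∈ Finset.range m, (T/m) * Gf x u (τ (i+1)) u := by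
    have hsplit : (∫ z in (0:ℝ)..T, Gf x u z u)
        = ∑ j ∈ Finset.range m, ∫ z in (τ j)..(τ (j+1)), Gf x u z u := by
      have hint : ∀ k < m,
          IntervalIntegrable (fun z => Gf x u z u) volume (τ k) (τ (k+1)) := by
        intro k hk
        exact Gf_intInt_left H hu hu (hτnn _) (hτmono _ _ (by omega))
      have := intervalIntegral.sum_integral_adjacent_intervals
        (a := τ) (n := m) (f := fun z => Gf x u z u) hint
      rw [hτ0, hτm] at this
      exact this.symm
    rw [hsplit]
    apply Finset.sum_le_sum
    intro j hj
    have hjm : j + 1 ≤ m := Finset.mem_range.mp hj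
    have hj0 : 0 ≤ τ j := hτnn _
    have hjj : τ j ≤ τ (j+1) := hτmono _ _ (by omega)
    have hc : ∫ z in (τ j)..(τ (j+1)), Gf x u (τ (j+1)) u
        = (T/m) * Gf x u (τ (j+1)) u := by
      rw [intervalIntegral.integral_const, smul_eq_mul, hstep j]
    rw [← hc]
    apply intervalIntegral.integral_mono_on hjj
      (Gf_intInt_left H hu hu hj0 hjj) intervalIntegrable_const
    intro z hz
    exact Gf_mono_left H hu hu (le_trans hj0 hz.1) hz.2
  have hfin : (∫ z in (0:ℝ)..T, Gf x u z u) ≤ (T/m) * ∑ i ∈ Finset.range m, Gf x u (τ (i+1)) u := by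
    rw [Finset.mul_sum]
    exact htarget
  have huT : 0 < u - T := by linarith
  have hSle : (∑ i ∈ Finset.range m, Gf x u (τ (i+1)) u) ≤ (T/2) / (u - T) := by
    rw [le_div_iff₀ huT]
    linarith [hmain]
  calc (∫ z in (0:ℝ)..T, Gf x u z u)
      ≤ (T/m) * ∑ i ∈ Finset.range m, Gf x u (τ (i+1)) u := hfin
    _ ≤ (T/m) * ((T/2) / (u - T)) := by
        apply mul_le_mul_of_nonneg_left hSle (by positivity)
    _ = (T/m) * (T/2) / (u - T) := by ring

end Grid
section Final

variable {x p : Rule} (H : Hyps x p) {u : ℝ}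
include H

lemma below_tie_zero (hu0 : 0 < u) {T : ℝ} (hT0 : 0 < T) (hTu : T < u) :
    (∫ z in (0:ℝ)..T, Gf x u z u) = 0 := by
  have hu : (0:ℝ) ≤ u := hu0.le
  refine le_antisymm ?_ ?_
  · by_contra hpos
    push_neg at hpos
    set J := ∫ z in (0:ℝ)..T, Gf x u z u with hJ
    set C := T * (T/2) / (u - T) with hC
    have hC0 : 0 ≤ C := by
      rw [hC]
      have : (0:ℝ) < u - T := by linarith
      positivity
    obtain ⟨n, hn⟩ := exists_nat_gt (C / J)
    have hn1 : 1 ≤ n := by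
      by_contra hcon
      have : n = 0 := by omega
      rw [this] at hn
      simp only [Nat.cast_zero] at hn
      have : 0 ≤ C / J := div_nonneg hC0 hpos.le
      linarith
    have hgb := grid_bound H hu0 hT0 hTu hn1
    have hnR : (0:ℝ) < (n:ℝ) := by exact_mod_cast Nat.pos_of_ne_zero (by omega)
    have heq : (T/(n:ℝ)) * (T/2) / (u - T) = C / n := by
      rw [hC]; ring
    rw [heq] at hgb
    have hlt : C / (n:ℝ) < J := by
      rw [div_lt_iff₀ hnR]
      have := (div_lt_iff₀ hpos).mp hn
      linarith [this]
    rw [← hJ] at hgb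
    linarith
  · exact intervalIntegral.integral_nonneg hT0.le
      (fun z hz => Gf_nonneg H hu hz.1 hu)

theorem tie_utility_zero (hu : 0 ≤ u) :
    (∫ z in (0:ℝ)..u, Gf x u z u) = 0 := by
  rcases eq_or_lt_of_le hu with heq | hu0
  · rw [← heq]
    simp
  refine le_antisymm ?_ (intervalIntegral.integral_nonneg hu
      (fun z hz => Gf_nonneg H hu hz.1 hu))
  by_contra hpos
  push_neg at hpos
  set I := ∫ z in (0:ℝ)..u, Gf x u z u with hI
  have hbound : ∀ T, 0 < T → T < u → I ≤ (u - T) / 2 := by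
    intro T hT0 hTu
    have hadd := intervalIntegral.integral_add_adjacent_intervals
      (Gf_intInt_left H hu hu le_rfl hT0.le) (Gf_intInt_left H hu hu hT0.le hTu.le)
    have hzero := below_tie_zero H hu0 hT0 hTu
    have htail : (∫ z in T..u, Gf x u z u) ≤ (u - T) / 2 := by
      have hc : ∫ z in T..u, (1/2 : ℝ) = (u - T) / 2 := by
        rw [intervalIntegral.integral_const, smul_eq_mul]
        ring
      rw [← hc]
      apply intervalIntegral.integral_mono_on hTu.le
        (Gf_intInt_left H hu hu hT0.le hTu.le) intervalIntegrable_const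
      intro z hz
      have h12 : Gf x u z u ≤ Gf x u u u :=
        Gf_mono_left H hu hu (le_trans hT0.le hz.1) hz.2
      rw [Gf_half H hu hu] at h12
      exact h12
    rw [hI, ← hadd, hzero]
    linarith
  have hmin : 0 < min I u := lt_min hpos hu0
  set T := u - min I u / 2 with hT
  have hT0 : 0 < T := by
    rw [hT]
    have : min I u ≤ u := min_le_right _ _
    linarith
  have hTu : T < u := by
    rw [hT]
    linarith
  have := hbound T hT0 hTu
  rw [hT] at this
  have hmle : min I u ≤ I := min_le_left _ _
  have : I ≤ min I u / 4 := by linarith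
  linarith

end Final
/-- `U_1(u,u) = 0` for every `u ≥ 0`: `∫_0^u x_1(z,u) dz = 0` in the two-bidder population,
where bidder `1` is index `0`. -/
theorem utility_at_tie_eq_zero (x p : Rule)
    (hF : Feasible x) (hNW : NonWasteful x) (hSym : SymmetricRule x)
    (hMon : MonotoneRule x) (hMy : MyersonPay x p) (hZ : ZeroPayAtZero p)
    (hSP : SybilProof x p) (u : ℝ) (hu : 0 ≤ u) :
    (∫ z in (0:ℝ)..u, x (Finset.range 2) (prof z u) 0) = 0 := by
  have H : Hyps x p := ⟨hF, hNW, hSym, hMon, hMy, hSP⟩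
  have hprof : ∀ z : ℝ, prof z u = Pp u u 2 z := by
    intro z
    funext k
    rcases eq_or_ne k 0 with rfl | h0
    · simp [prof, Pp]
    · simp only [prof, Pp, if_neg h0]
      split_ifs <;> rfl
  have hcong : (∫ z in (0:ℝ)..u, x (Finset.range 2) (prof z u) 0)
      = ∫ z in (0:ℝ)..u, Gf x u z u := by
    apply intervalIntegral.integral_congr
    intro z _
    show x (Finset.range 2) (prof z u) 0 = Gf x u z u
    rw [hprof z]
    rfl
  rw [hcong]
  exact tie_utility_zero H hu
end
end

section
/- Fix a reserve price r > 0. The second price auction with reserve price r and symmetric tie-breaking — which for each finite set N ⊆ ℕ and each v ∈ [0,∞)^N sets x_i^N(v) = 1/k if v_i ≥ r and v_i = max_{j∈N} v_j where k = |{j ∈ N : v_j = max_{l∈N} v_l}|, sets x_i^N(v) = 0 otherwise, and charges Myerson payments p_i^N(v) = v_i·x_i^N(v) − ∫_0^{v_i} x_i^N(z, v_{-i}) dz — satisfies symmetry, dominant-strategy incentive compatibility and sybil-proofness, but violates non-wastefulness: there exist a finite set N and v ∈ [0,∞)^N with Σ_{i∈N} x_i^N(v) < 1. -/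
open MeasureTheory Finset
open scoped Classical

noncomputable section

/-- The second price auction with reserve price `r` and symmetric tie-breaking:
a bidder receives `1/k` if his bid is at least `r` and is a highest bid, where `k` is the
number of highest bidders, and `0` otherwise. -/
def sprX (r : ℝ) : Rule := fun N v i =>
  if i ∈ N ∧ r ≤ v i ∧ ∀ j ∈ N, v j ≤ v i
  then 1 / ((N.filter fun j => ∀ l ∈ N, v l ≤ v j).card : ℝ) else 0

/-- The Myerson payments associated with the reserve-price second price auction. -/
def sprP (r : ℝ) : Rule := fun N v i =>
  v i * sprX r N v i - ∫ z in (0:ℝ)..(v i), sprX r N (Function.update v i z) i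

/-- The threshold: max of the reserve and the others' bids. -/
def thr (r : ℝ) (N : Finset ℕ) (i : ℕ) (hi : i ∈ N) (v : ℕ → ℝ) : ℝ :=
  N.sup' ⟨i, hi⟩ (fun l => if l = i then r else max r (v l))

lemma thr_le_iff {r : ℝ} {N : Finset ℕ} {i : ℕ} (hi : i ∈ N) {v : ℕ → ℝ} {z : ℝ} :
    thr r N i hi v ≤ z ↔ r ≤ z ∧ ∀ l ∈ N, l ≠ i → v l ≤ z := by
  rw [thr]
  refine (Finset.sup'_le_iff (H := ⟨i, hi⟩) (f := fun l => if l = i then r else max r (v l))).trans ?_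
  constructor
  · intro h
    refine ⟨by simpa using h i hi, fun l hl hne => ?_⟩
    have := h l hl
    rw [if_neg hne] at this
    exact le_trans (le_max_right _ _) this
  · rintro ⟨h1, h2⟩ l hl
    by_cases hli : l = i
    · simpa [hli] using h1
    · rw [if_neg hli]
      exact max_le h1 (h2 l hl hli)

lemma r_le_thr {r : ℝ} {N : Finset ℕ} {i : ℕ} (hi : i ∈ N) {v : ℕ → ℝ} :
    r ≤ thr r N i hi v := by
  have := Finset.le_sup' (f := fun l => if l = i then r else max r (v l)) hi
  simpa [thr] using this

lemma le_thr_of_ne {r : ℝ} {N : Finset ℕ} {i l : ℕ} (hi : i ∈ N) (hl : l ∈ N)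
    (hne : l ≠ i) {v : ℕ → ℝ} : v l ≤ thr r N i hi v := by
  have := Finset.le_sup' (f := fun m => if m = i then r else max r (v m)) hl
  rw [if_neg hne] at this
  exact le_trans (le_max_right _ _) (by simpa [thr] using this)

lemma sprX_nonneg (r : ℝ) (N : Finset ℕ) (v : ℕ → ℝ) (i : ℕ) : 0 ≤ sprX r N v i := by
  unfold sprX; split <;> positivity

lemma sprX_le_one (r : ℝ) (N : Finset ℕ) (v : ℕ → ℝ) (i : ℕ) : sprX r N v i ≤ 1 := by
  unfold sprX
  split
  · rename_i h
    have hmem : i ∈ N.filter fun j => ∀ l ∈ N, v l ≤ v j :=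
      Finset.mem_filter.2 ⟨h.1, h.2.2⟩
    have hcard : 1 ≤ (N.filter fun j => ∀ l ∈ N, v l ≤ v j).card :=
      Finset.card_pos.2 ⟨i, hmem⟩
    have : (1:ℝ) ≤ ((N.filter fun j => ∀ l ∈ N, v l ≤ v j).card : ℝ) := by exact_mod_cast hcard
    rw [div_le_one (by linarith)]
    linarith
  · norm_num

section Xlem
variable {r : ℝ} {N : Finset ℕ} {i : ℕ}

lemma X_eq_zero (hi : i ∈ N) (w : ℕ → ℝ) {z : ℝ} (hz : z < thr r N i hi w) :
    sprX r N (Function.update w i z) i = 0 := by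
  unfold sprX
  rw [if_neg]
  rintro ⟨-, h1, h2⟩
  have : thr r N i hi w ≤ z := by
    rw [thr_le_iff]
    refine ⟨by simpa using h1, fun l hl hne => ?_⟩
    have := h2 l hl
    simpa [Function.update_apply, hne] using this
  linarith

lemma X_eq_one (hi : i ∈ N) (w : ℕ → ℝ) {z : ℝ} (hz : thr r N i hi w < z) :
    sprX r N (Function.update w i z) i = 1 := by
  have ht := (thr_le_iff hi (v := w) (z := z)).1 hz.le
  have hcond : i ∈ N ∧ r ≤ Function.update w i z i ∧
      ∀ j ∈ N, Function.update w i z j ≤ Function.update w i z i := by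
    refine ⟨hi, by simpa using ht.1, fun j hj => ?_⟩
    by_cases hji : j = i
    · subst hji; simp
    · simpa [Function.update_apply, hji] using ht.2 j hj hji
  have hfilt : (N.filter fun j => ∀ l ∈ N, Function.update w i z l ≤ Function.update w i z j)
      = {i} := by
    ext j
    simp only [Finset.mem_filter, Finset.mem_singleton]
    constructor
    · rintro ⟨hj, hmax⟩
      by_contra hji
      have h1 : Function.update w i z i ≤ Function.update w i z j := hmax i hi
      have h2 : w j ≤ thr r N i hi w := le_thr_of_ne hi hj hji
      rw [Function.update_self, Function.update_of_ne hji] at h1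
      linarith
    · rintro rfl
      exact ⟨hi, hcond.2.2⟩
  unfold sprX
  rw [if_pos hcond, hfilt]
  norm_num

lemma X_mono (hi : i ∈ N) (w : ℕ → ℝ) : Monotone (fun z => sprX r N (Function.update w i z) i) := by
  intro z1 z2 hz
  show sprX r N (Function.update w i z1) i ≤ sprX r N (Function.update w i z2) i
  rcases lt_trichotomy z2 (thr r N i hi w) with h | h | h
  · rw [X_eq_zero hi w (lt_of_le_of_lt hz h), X_eq_zero hi w h]
  · rcases eq_or_lt_of_le hz with rfl | hlt
    · exact le_rfl
    · have : z1 < thr r N i hi w := h ▸ hlt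
      rw [X_eq_zero hi w this]
      exact sprX_nonneg _ _ _ _
  · rcases lt_trichotomy z1 (thr r N i hi w) with h1 | h1 | h1
    · rw [X_eq_zero hi w h1]; exact sprX_nonneg _ _ _ _
    · rw [X_eq_one hi w h]; exact sprX_le_one _ _ _ _
    · rw [X_eq_one hi w h1, X_eq_one hi w h]

lemma integral_X (hi : i ∈ N) (w : ℕ → ℝ) (hr : 0 < r) (c : ℝ) :
    ∫ z in (0:ℝ)..c, sprX r N (Function.update w i z) i = max (c - thr r N i hi w) 0 := by
  set t := thr r N i hi w with ht
  have htpos : 0 < t := lt_of_lt_of_le hr (r_le_thr hi)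
  have hInt : ∀ a b : ℝ, IntervalIntegrable
      (fun z => sprX r N (Function.update w i z) i) volume a b :=
    fun a b => (X_mono hi w).intervalIntegrable
  have hae : ∀ᵐ z : ℝ, z ≠ t := by
    rw [MeasureTheory.ae_iff]
    convert Real.volume_singleton (a := t) using 2
    ext z; simp
  rcases le_or_gt c t with hc | hc
  · rw [max_eq_right (by linarith)]
    rw [intervalIntegral.integral_congr_ae (g := fun _ => (0:ℝ))]
    · simp
    · filter_upwards [hae] with z hzt hzI
      have hzle : z ≤ max 0 c := (Set.uIoc_subset_uIcc hzI).2
      have : z < t := lt_of_le_of_ne (le_trans hzle (max_le htpos.le hc)) hzt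
      exact X_eq_zero hi w this
  · rw [max_eq_left (by linarith)]
    have hsplit := intervalIntegral.integral_add_adjacent_intervals (hInt 0 t) (hInt t c)
    have h1 : ∫ z in (0:ℝ)..t, sprX r N (Function.update w i z) i = 0 := by
      rw [intervalIntegral.integral_congr_ae (g := fun _ => (0:ℝ))]
      · simp
      · filter_upwards [hae] with z hzt hzI
        have hzle : z ≤ max 0 t := (Set.uIoc_subset_uIcc hzI).2
        have : z < t := lt_of_le_of_ne (le_trans hzle (by simp [htpos.le])) hzt
        exact X_eq_zero hi w this
    have h2 : ∫ z in t..c, sprX r N (Function.update w i z) i = c - t := by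
      rw [intervalIntegral.integral_congr_ae (g := fun _ => (1:ℝ))]
      · simp
      · filter_upwards with z hzI
        rw [Set.uIoc_of_le hc.le] at hzI
        exact X_eq_one hi w hzI.1
    linarith [hsplit, h1, h2]

end Xlem

/-- Utility formula: for bidder `i` reporting `c` (others as in `w`), the
"Myerson surplus" `b·x − p` where `b` is the true value. -/
lemma surplus_formula {r : ℝ} (hr : 0 < r) {N : Finset ℕ} {i : ℕ} (hi : i ∈ N)
    (w : ℕ → ℝ) (b c : ℝ) :
    b * sprX r N (Function.update w i c) i - sprP r N (Function.update w i c) i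
      = (b - c) * sprX r N (Function.update w i c) i + max (c - thr r N i hi w) 0 := by
  unfold sprP
  simp only [Function.update_self, Function.update_idem]
  rw [integral_X hi w hr c]
  ring

lemma ic_aux {r : ℝ} (hr : 0 < r) {N : Finset ℕ} {i : ℕ} (hi : i ∈ N)
    (v : ℕ → ℝ) (hv : 0 ≤ v i) (ui : ℝ) (hui : 0 ≤ ui) :
    v i * sprX r N v i - sprP r N v i ≥
      v i * sprX r N (Function.update v i ui) i - sprP r N (Function.update v i ui) i := by
  have hL : v i * sprX r N v i - sprP r N v i = max (v i - thr r N i hi v) 0 := by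
    have h := surplus_formula hr hi v (v i) (v i)
    rw [Function.update_eq_self] at h
    rw [h]; ring
  have hR := surplus_formula hr hi v (v i) ui
  have hX0 := sprX_nonneg r N (Function.update v i ui) i
  have hX1 := sprX_le_one r N (Function.update v i ui) i
  rw [hL, hR]
  rcases lt_trichotomy ui (thr r N i hi v) with h | h | h
  · rw [X_eq_zero hi v h,
      show max (ui - thr r N i hi v) 0 = 0 from max_eq_right (by linarith)]
    simpa using le_max_right (v i - thr r N i hi v) 0
  · rw [h, show max (thr r N i hi v - thr r N i hi v) 0 = 0 from max_eq_right (by linarith)]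
    rcases le_or_gt (v i) (thr r N i hi v) with hle | hlt
    · have hmul : (v i - thr r N i hi v) * sprX r N (Function.update v i (thr r N i hi v)) i ≤ 0 :=
        mul_nonpos_of_nonpos_of_nonneg (by linarith) (h ▸ hX0)
      have := le_max_right (v i - thr r N i hi v) (0:ℝ)
      linarith
    · have hmul : (v i - thr r N i hi v) * sprX r N (Function.update v i (thr r N i hi v)) i
          ≤ v i - thr r N i hi v := by nlinarith [h ▸ hX1, h ▸ hX0]
      have := le_max_left (v i - thr r N i hi v) (0:ℝ)
      linarith
  · rw [X_eq_one hi v h,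
      show max (ui - thr r N i hi v) 0 = ui - thr r N i hi v from max_eq_left (by linarith)]
    have := le_max_left (v i - thr r N i hi v) (0:ℝ)
    linarith

lemma sybil_aux {r : ℝ} (hr : 0 < r) {N : Finset ℕ} {i j : ℕ} (hi : i ∈ N) (hj : j ∉ N)
    (v : ℕ → ℝ) (u : ℝ) :
    v i * sprX r N v i - sprP r N v i ≥
      v i * (sprX r (insert j N) (Function.update v j u) i +
             sprX r (insert j N) (Function.update v j u) j) -
        sprP r (insert j N) (Function.update v j u) i -
        sprP r (insert j N) (Function.update v j u) j := by
  have hij : i ≠ j := fun h => hj (h ▸ hi)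
  have hiN' : i ∈ insert j N := Finset.mem_insert_of_mem hi
  have hjN' : j ∈ insert j N := Finset.mem_insert_self j N
  have hv'i : Function.update v j u i = v i := Function.update_of_ne hij u v
  -- LHS formula
  have hL : v i * sprX r N v i - sprP r N v i = max (v i - thr r N i hi v) 0 := by
    have h := surplus_formula hr hi v (v i) (v i)
    rw [Function.update_eq_self] at h
    rw [h]; ring
  -- formula for i's term in the sybil world
  have hTi : v i * sprX r (insert j N) (Function.update v j u) i -
      sprP r (insert j N) (Function.update v j u) i
      = max (v i - thr r (insert j N) i hiN' (Function.update v j u)) 0 := by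
    have h := surplus_formula hr hiN' (Function.update v j u) (v i)
      (Function.update v j u i)
    rw [Function.update_eq_self, hv'i] at h
    rw [h]; ring
  -- formula for j's term in the sybil world
  have hTj : v i * sprX r (insert j N) (Function.update v j u) j -
      sprP r (insert j N) (Function.update v j u) j
      = (v i - u) * sprX r (insert j N) (Function.update v j u) j +
        max (u - thr r (insert j N) j hjN' (Function.update v j u)) 0 := by
    have h := surplus_formula hr hjN' (Function.update v j u) (v i) u
    rw [Function.update_idem] at h
    rw [h]
  -- threshold comparisons
  have htt' : thr r N i hi v ≤ thr r (insert j N) i hiN' (Function.update v j u) := by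
    rw [thr_le_iff]
    refine ⟨r_le_thr hiN', fun l hl hne => ?_⟩
    have hlj : l ≠ j := fun h => hj (h ▸ hl)
    have := le_thr_of_ne (r := r) hiN' (Finset.mem_insert_of_mem hl) hne
      (v := Function.update v j u)
    rwa [Function.update_of_ne hlj] at this
  have hvis : v i ≤ thr r (insert j N) j hjN' (Function.update v j u) := by
    have := le_thr_of_ne (r := r) hjN' hiN' hij (v := Function.update v j u)
    rwa [hv'i] at this
  have hut' : u ≤ thr r (insert j N) i hiN' (Function.update v j u) := by
    have := le_thr_of_ne (r := r) hiN' hjN' (Ne.symm hij) (v := Function.update v j u)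
    rwa [Function.update_self] at this
  have hsplit : v i * (sprX r (insert j N) (Function.update v j u) i +
             sprX r (insert j N) (Function.update v j u) j) -
        sprP r (insert j N) (Function.update v j u) i -
        sprP r (insert j N) (Function.update v j u) j
      = (v i * sprX r (insert j N) (Function.update v j u) i -
          sprP r (insert j N) (Function.update v j u) i) +
        (v i * sprX r (insert j N) (Function.update v j u) j -
          sprP r (insert j N) (Function.update v j u) j) := by ring
  rw [hL, hsplit, hTi, hTj]
  have hmax' : max (v i - thr r (insert j N) i hiN' (Function.update v j u)) 0
      ≤ max (v i - thr r N i hi v) 0 := max_le_max (by linarith) le_rfl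
  have hXj0 := sprX_nonneg r (insert j N) (Function.update v j u) j
  have hXj1 := sprX_le_one r (insert j N) (Function.update v j u) j
  rcases lt_trichotomy u (thr r (insert j N) j hjN' (Function.update v j u)) with h | h | h
  · have hxj : sprX r (insert j N) (Function.update v j u) j = 0 := by
      have := X_eq_zero hjN' (Function.update v j u) h
      rwa [Function.update_idem] at this
    rw [hxj, show max (u - thr r (insert j N) j hjN' (Function.update v j u)) 0 = 0
      from max_eq_right (by linarith)]
    linarith
  · rw [show max (u - thr r (insert j N) j hjN' (Function.update v j u)) 0 = 0
      from max_eq_right (by linarith)]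
    have hmul : (v i - u) * sprX r (insert j N) (Function.update v j u) j ≤ 0 :=
      mul_nonpos_of_nonpos_of_nonneg (by linarith) hXj0
    linarith
  · have hxj : sprX r (insert j N) (Function.update v j u) j = 1 := by
      have := X_eq_one hjN' (Function.update v j u) h
      rwa [Function.update_idem] at this
    rw [hxj, show max (u - thr r (insert j N) j hjN' (Function.update v j u)) 0
        = u - thr r (insert j N) j hjN' (Function.update v j u)
      from max_eq_left (by linarith),
      show max (v i - thr r (insert j N) i hiN' (Function.update v j u)) 0 = 0
      from max_eq_right (by linarith)]
    have := le_max_right (v i - thr r N i hi v) (0:ℝ)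
    linarith

lemma symm_aux (r : ℝ) (N : Finset ℕ) (v : ℕ → ℝ) (π : Equiv.Perm ℕ)
    (hπ : ∀ i, i ∈ N ↔ π i ∈ N) (j : ℕ) (hj : j ∈ N) :
    sprX r N v j = sprX r N (v ∘ π.symm) (π j) := by
  have hsymm : ∀ l, l ∈ N ↔ π.symm l ∈ N := by
    intro l
    rw [hπ (π.symm l), Equiv.apply_symm_apply]
  have hvj : (v ∘ π.symm) (π j) = v j := by simp
  have hA : (∀ l ∈ N, v l ≤ v j) ↔ (∀ l ∈ N, (v ∘ π.symm) l ≤ (v ∘ π.symm) (π j)) := by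
    rw [hvj]
    constructor
    · intro h l hl
      exact h (π.symm l) ((hsymm l).1 hl)
    · intro h m hm
      have : (v ∘ π.symm) (π m) ≤ v j := h (π m) ((hπ m).1 hm)
      simpa using this
  have hcard : (N.filter fun a => ∀ l ∈ N, v l ≤ v a).card
      = (N.filter fun a => ∀ l ∈ N, (v ∘ π.symm) l ≤ (v ∘ π.symm) a).card := by
    apply Finset.card_bij (fun a _ => π a)
    · rintro a ha
      rw [Finset.mem_filter] at ha ⊢
      refine ⟨(hπ a).1 ha.1, fun l hl => ?_⟩
      have : v (π.symm l) ≤ v a := ha.2 (π.symm l) ((hsymm l).1 hl)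
      simpa using this
    · intro a ha b hb hab
      exact π.injective hab
    · intro b hb
      rw [Finset.mem_filter] at hb
      refine ⟨π.symm b, Finset.mem_filter.2 ⟨(hsymm b).1 hb.1, fun l hl => ?_⟩,
        Equiv.apply_symm_apply π b⟩
      have : (v ∘ π.symm) (π l) ≤ (v ∘ π.symm) b := hb.2 (π l) ((hπ l).1 hl)
      simpa using this
  unfold sprX
  by_cases h : j ∈ N ∧ r ≤ v j ∧ ∀ l ∈ N, v l ≤ v j
  · rw [if_pos h, if_pos ⟨(hπ j).1 hj, by rw [hvj]; exact h.2.1, hA.1 h.2.2⟩, hcard]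
  · have hc : ¬ (π j ∈ N ∧ r ≤ (v ∘ π.symm) (π j) ∧
        ∀ l ∈ N, (v ∘ π.symm) l ≤ (v ∘ π.symm) (π j)) := by
      rintro ⟨-, h1, h2⟩
      exact h ⟨hj, by rwa [hvj] at h1, hA.2 h2⟩
    rw [if_neg h, if_neg hc]

/-- For any reserve price `r > 0`, the second price auction with reserve `r` and symmetric
tie-breaking is symmetric, dominant-strategy incentive compatible, and sybil-proof, but
violates non-wastefulness. -/
theorem reserve_price_auction_not_nonwasteful (r : ℝ) (hr : 0 < r) :
    SymmetricRule (sprX r) ∧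
    (∀ N, ∀ i ∈ N, ∀ v, NonnegOn N v → ∀ ui : ℝ, 0 ≤ ui →
      v i * sprX r N v i - sprP r N v i ≥
        v i * sprX r N (Function.update v i ui) i -
          sprP r N (Function.update v i ui) i) ∧
    SybilProof (sprX r) (sprP r) ∧
    (∃ N : Finset ℕ, ∃ v : ℕ → ℝ, N.Nonempty ∧ NonnegOn N v ∧
      ∑ i ∈ N, sprX r N v i < 1) := by
  refine ⟨?_, ?_, ?_, ?_⟩
  · intro N v hv π hπ j hj
    exact symm_aux r N v π hπ j hj
  · intro N i hi v hv ui hui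
    exact ic_aux hr hi v (hv i hi) ui hui
  · intro N i hi j hj v hv u hu
    exact sybil_aux hr hi hj v u
  · refine ⟨{0}, fun _ => 0, ⟨0, Finset.mem_singleton_self 0⟩, fun i _ => le_rfl, ?_⟩
    rw [Finset.sum_singleton]
    unfold sprX
    rw [if_neg]
    · norm_num
    · rintro ⟨-, h, -⟩
      exact absurd h (by norm_num; linarith)
end
end
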